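/- arXiv:2105.01684 — 3 statements merged into one kernel-verified Lean document; each statement's English description precedes it below -/
import Mathlib

section
/- Let G be a graph and L a list assignment with |L(v)| ≥ Δ(G) + 3 for all v. If G contains a path u–v–w–x where v and w both have degree 2 in G, and G − {v,w} admits a 2-distance L-coloring, then G admits a 2-distance L-coloring. -/
open SimpleGraph

/-- Maximum average degree: the supremum over all nonempty subgraphs `H` of `2|E(H)|/|V(H)|`. -/
noncomputable def mad {V : Type} [Fintype V] (G : SimpleGraph V) : ℝ :=
  sSup {x : ℝ | ∃ H : G.Subgraph, H.verts.Nonempty ∧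
    x = 2 * H.edgeSet.ncard / H.verts.ncard}

/-- Two distinct vertices are at distance at most 2. -/
def TwoDistAdj {V : Type} (G : SimpleGraph V) (u v : V) : Prop :=
  u ≠ v ∧ (G.Adj u v ∨ ∃ w, G.Adj u w ∧ G.Adj w v)

/-- `φ` is a 2-distance coloring of `G` from the lists `L`: each vertex gets a color from
its list and vertices at distance at most 2 get distinct colors. -/
def IsTwoDistListColoring {V : Type} (G : SimpleGraph V) (L : V → Finset ℕ) (φ : V → ℕ) :
    Prop :=
  (∀ v, φ v ∈ L v) ∧ ∀ u v, TwoDistAdj G u v → φ u ≠ φ v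

open Finset

/-!
Removing the two degree-2 vertices `v, w` of the path `u–v–w–x` creates no new pair at distance
at most 2, since each of them has only one neighbour (`u`, resp. `x`) left in `G − {v, w}`; so a
coloring of `G − {v, w}` is a partial coloring of `G`. Every vertex `y` has at most
`∑_{m ∼ y} deg m` vertices at distance at most 2, which for `v` and `w` is at most `Δ(G) + 2`,
so each of them can be colored greedily from its list of size `Δ(G) + 3`.
-/

variable {V : Type}

theorem TwoDistAdj.symm {G : SimpleGraph V} {y z : V} (h : TwoDistAdj G y z) :
    TwoDistAdj G z y := by
  obtain ⟨hne, hadj | ⟨m, hym, hmz⟩⟩ := h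
  · exact ⟨hne.symm, .inl hadj.symm⟩
  · exact ⟨hne.symm, .inr ⟨m, hmz.symm, hym.symm⟩⟩

theorem TwoDistAdj.induce {G : SimpleGraph V} {s : Set V}
    (hs : ∀ m ∉ s, (G.neighborSet m ∩ s).Subsingleton) {y z : s} (h : TwoDistAdj G y z) :
    TwoDistAdj (G.induce s) y z := by
  obtain ⟨hne, hadj | ⟨m, hym, hmz⟩⟩ := h
  · exact ⟨fun h => hne (congrArg Subtype.val h), .inl hadj⟩
  · refine ⟨fun h => hne (congrArg Subtype.val h), .inr ?_⟩
    by_cases hm : m ∈ s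
    · exact ⟨⟨m, hm⟩, hym, hmz⟩
    · exact absurd (hs m hm ⟨hym.symm, y.2⟩ ⟨hmz, z.2⟩) hne

def IsTwoDistListColoringOn (G : SimpleGraph V) (L : V → Finset ℕ) (D : Set V) (φ : V → ℕ) :
    Prop :=
  (∀ y ∈ D, φ y ∈ L y) ∧ ∀ y ∈ D, ∀ z ∈ D, TwoDistAdj G y z → φ y ≠ φ z

theorem isTwoDistListColoringOn_univ {G : SimpleGraph V} {L : V → Finset ℕ} {φ : V → ℕ} :
    IsTwoDistListColoringOn G L Set.univ φ ↔ IsTwoDistListColoring G L φ := by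
  simp [IsTwoDistListColoringOn, IsTwoDistListColoring]

theorem IsTwoDistListColoring.extend_induce {G : SimpleGraph V} {L : V → Finset ℕ} {s : Set V}
    (hs : ∀ m ∉ s, (G.neighborSet m ∩ s).Subsingleton) {φ : s → ℕ}
    (hφ : IsTwoDistListColoring (G.induce s) (fun y => L y) φ) :
    IsTwoDistListColoringOn G L s (Function.extend Subtype.val φ 0) := by
  have hext (y : V) (hy : y ∈ s) : Function.extend Subtype.val φ 0 y = φ ⟨y, hy⟩ :=
    Subtype.val_injective.extend_apply φ 0 ⟨y, hy⟩
  refine ⟨fun y hy => hext y hy ▸ hφ.1 ⟨y, hy⟩, fun y hy z hz hyz => ?_⟩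
  rw [hext y hy, hext z hz]
  exact hφ.2 ⟨y, hy⟩ ⟨z, hz⟩ (TwoDistAdj.induce hs hyz)

namespace SimpleGraph

variable (G : SimpleGraph V) [Fintype V] [DecidableRel G.Adj] [DecidableEq V]

theorem neighborFinset_eq_pair_of_degree_eq_two {v a b : V} (ha : G.Adj v a) (hb : G.Adj v b)
    (hab : a ≠ b) (hv : G.degree v = 2) : G.neighborFinset v = {a, b} := by
  refine (eq_of_subset_of_card_le ?_ ?_).symm
  · simp [insert_subset_iff, ha, hb]
  · rw [card_pair hab, card_neighborFinset_eq_degree, hv]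

def twoDistNeighborFinset (v : V) : Finset V :=
  (G.neighborFinset v).biUnion fun m => insert m ((G.neighborFinset m).erase v)

theorem mem_twoDistNeighborFinset {v z : V} (h : TwoDistAdj G v z) :
    z ∈ G.twoDistNeighborFinset v := by
  obtain ⟨hne, hadj | ⟨m, hvm, hmz⟩⟩ := h
  · exact mem_biUnion.2 ⟨z, (G.mem_neighborFinset v z).2 hadj, mem_insert_self _ _⟩
  · refine mem_biUnion.2 ⟨m, (G.mem_neighborFinset v m).2 hvm, mem_insert_of_mem ?_⟩
    exact mem_erase.2 ⟨hne.symm, (G.mem_neighborFinset m z).2 hmz⟩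

theorem card_twoDistNeighborFinset_le (v : V) :
    #(G.twoDistNeighborFinset v) ≤ ∑ m ∈ G.neighborFinset v, G.degree m := by
  refine card_biUnion_le.trans (sum_le_sum fun m hm => (card_insert_le _ _).trans ?_)
  have hvm : v ∈ G.neighborFinset m :=
    (G.mem_neighborFinset m v).2 ((G.mem_neighborFinset v m).1 hm).symm
  rw [card_erase_of_mem hvm, card_neighborFinset_eq_degree]
  have : 0 < G.degree m := (G.card_neighborFinset_eq_degree m) ▸ card_pos.2 ⟨v, hvm⟩
  omega

theorem card_twoDistNeighborFinset_le_maxDegree_add_two {v a b : V} (ha : G.Adj v a)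
    (hb : G.Adj v b) (hab : a ≠ b) (hv : G.degree v = 2) (hdb : G.degree b = 2) :
    #(G.twoDistNeighborFinset v) ≤ G.maxDegree + 2 :=
  calc #(G.twoDistNeighborFinset v)
      ≤ ∑ m ∈ G.neighborFinset v, G.degree m := G.card_twoDistNeighborFinset_le v
    _ = G.degree a + 2 := by
      rw [G.neighborFinset_eq_pair_of_degree_eq_two ha hb hab hv, sum_pair hab, hdb]
    _ ≤ G.maxDegree + 2 := by gcongr; exact G.degree_le_maxDegree a

end SimpleGraph

theorem IsTwoDistListColoringOn.exists_update_insert {G : SimpleGraph V} [Fintype V]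
    [DecidableRel G.Adj] [DecidableEq V] {L : V → Finset ℕ} {D : Set V} {φ : V → ℕ}
    (hφ : IsTwoDistListColoringOn G L D φ) {v : V}
    (hv : #(G.twoDistNeighborFinset v) < #(L v)) :
    ∃ c, IsTwoDistListColoringOn G L (insert v D) (Function.update φ v c) := by
  obtain ⟨c, hcL, hcφ⟩ := exists_mem_notMem_of_card_lt_card (card_image_le.trans_lt hv)
  have hc {z : V} (hz : TwoDistAdj G v z) : c ≠ φ z := fun h =>
    hcφ (mem_image.2 ⟨z, G.mem_twoDistNeighborFinset hz, h.symm⟩)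
  refine ⟨c, fun y hy => ?_, fun y hy z hz hyz => ?_⟩
  · rcases eq_or_ne y v with rfl | hyv
    · simpa using hcL
    · simpa [hyv] using hφ.1 y (hy.resolve_left hyv)
  · rcases eq_or_ne y v with hyv | hyv <;> rcases eq_or_ne z v with hzv | hzv
    · exact absurd (hyv.trans hzv.symm) hyz.1
    · simpa [hyv, hzv] using hc (hyv ▸ hyz)
    · simpa [hyv, hzv] using (hc (hzv ▸ hyz.symm)).symm
    · simpa [hyv, hzv] using hφ.2 y (hy.resolve_left hyv) z (hz.resolve_left hzv) hyz

theorem extend_coloring_two_path_general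
    {V : Type} [Fintype V] (G : SimpleGraph V) [DecidableRel G.Adj]
    (L : V → Finset ℕ) (hL : ∀ y, G.maxDegree + 3 ≤ (L y).card)
    (u v w x : V) (huv : G.Adj u v) (hvw : G.Adj v w) (hwx : G.Adj w x)
    (huw : u ≠ w) (hvx : v ≠ x)
    (hdv : G.degree v = 2) (hdw : G.degree w = 2)
    (hcol : ∃ φ, IsTwoDistListColoring (G.induce {y | y ≠ v ∧ y ≠ w})
      (fun y => L y.1) φ) :
    ∃ φ : V → ℕ, IsTwoDistListColoring G L φ := by
  classical
  obtain ⟨φ, hφ⟩ := hcol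
  have hNv := G.neighborFinset_eq_pair_of_degree_eq_two huv.symm hvw huw hdv
  have hNw := G.neighborFinset_eq_pair_of_degree_eq_two hvw.symm hwx hvx hdw
  have hs : ∀ m ∉ {y | y ≠ v ∧ y ≠ w},
      (G.neighborSet m ∩ {y | y ≠ v ∧ y ≠ w}).Subsingleton := by
    intro m hm a ⟨ha, has⟩ b ⟨hb, hbs⟩
    rw [mem_neighborSet, ← mem_neighborFinset] at ha hb
    obtain rfl | rfl : m = v ∨ m = w := by grind
    · simp only [hNv, mem_insert, mem_singleton] at ha hb; grind
    · simp only [hNw, mem_insert, mem_singleton] at ha hb; grind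
  obtain ⟨a, hφa⟩ := (hφ.extend_induce hs).exists_update_insert
    ((G.card_twoDistNeighborFinset_le_maxDegree_add_two huv.symm hvw huw hdv hdw).trans_lt
      (by linarith [hL v]))
  obtain ⟨b, hφb⟩ := hφa.exists_update_insert
    ((G.card_twoDistNeighborFinset_le_maxDegree_add_two hwx hvw.symm hvx.symm hdw hdv).trans_lt
      (by linarith [hL w]))
  have hcover : insert w (insert v {y | y ≠ v ∧ y ≠ w}) = Set.univ := by
    ext y
    simp only [Set.mem_insert_iff, Set.mem_ofPred_eq, Set.mem_univ, iff_true]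
    tauto
  rw [hcover] at hφb
  exact ⟨_, isTwoDistListColoringOn_univ.1 hφb⟩

/-- If `G` has a path `u–v–w–x` with `v, w` of degree 2 and lists of size at least
`Δ(G) + 3`, then any 2-distance list coloring of `G − {v, w}` extends to one of `G`. -/
theorem extend_coloring_two_path
    {V : Type} [Fintype V] [DecidableEq V] (G : SimpleGraph V) [DecidableRel G.Adj]
    (L : V → Finset ℕ) (hL : ∀ y, G.maxDegree + 3 ≤ (L y).card)
    (u v w x : V) (huv : G.Adj u v) (hvw : G.Adj v w) (hwx : G.Adj w x)
    (huw : u ≠ w) (hux : u ≠ x) (hvx : v ≠ x)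
    (hdv : G.degree v = 2) (hdw : G.degree w = 2)
    (hcol : ∃ φ, IsTwoDistListColoring (G.induce {y | y ≠ v ∧ y ≠ w})
      (fun y => L y.1) φ) :
    ∃ φ : V → ℕ, IsTwoDistListColoring G L φ :=
  extend_coloring_two_path_general G L hL u v w x huv hvw hwx huw hvx hdv hdw hcol
end

section
/- Every graph G with mad(G) < 8/3, minimum degree at least 2, no path containing two consecutive internal vertices of degree 2 (i.e., no 2⁺-path), no (1,1,1)-vertex, no 3-vertex having both a 2-neighbor and a (1,1,0)-neighbor, and no 3-vertex having two (1,1,0)-neighbors together with a further 3-neighbor, and with maximum degree at most Δ, satisfies a contradiction: no such nonempty G exists. -/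
/-!
Give each vertex `u` the charge `3 d(u) - 8`; as `mad G < 8/3`, the total charge `6|E| - 8|V|`
is negative. Move one unit along an edge `u → v` when `v` is a 2-vertex, when `u` is a
4⁺-vertex, or when `u` is a 3-vertex other than a (1,1,0)-vertex and `v` is a (1,1,0)-vertex.
The total is unchanged, but every final charge is nonnegative. A 2-vertex has no 2-neighbour,
so it gains two units. A 3-vertex with a 2-neighbour feeds no (1,1,0)-vertex, so, lacking
(1,1,1)-vertices, it gives at most two units, and gives two only if it is a (1,1,0)-vertex, in
which case its third neighbour feeds it. A 3-vertex without 2-neighbours that feeds two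
(1,1,0)-neighbours has a third neighbour of degree at least 4, which feeds it.
-/

open SimpleGraph

/-- A `(1,1,0)`-vertex: a 3-vertex with exactly two neighbors of degree 2. -/
def IsOneOneZeroVertex {V : Type} [Fintype V] [DecidableEq V] (G : SimpleGraph V)
    [DecidableRel G.Adj] (v : V) : Prop :=
  G.degree v = 3 ∧ ((G.neighborFinset v).filter fun u => G.degree u = 2).card = 2

open Finset

section MaximumAverageDegree

variable {V : Type} [Fintype V] (G : SimpleGraph V) [DecidableRel G.Adj]

theorem two_mul_card_edgeFinset_div_le_mad [Nonempty V] :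
    2 * (#G.edgeFinset : ℝ) / Fintype.card V ≤ mad G := by
  have hbdd : BddAbove {x : ℝ | ∃ H : G.Subgraph, H.verts.Nonempty ∧
      x = 2 * H.edgeSet.ncard / H.verts.ncard} := by
    refine ⟨2 * G.edgeSet.ncard, ?_⟩
    rintro x ⟨H, hne, rfl⟩
    have hV : (1 : ℝ) ≤ H.verts.ncard := by
      exact_mod_cast (Set.ncard_pos (Set.toFinite _)).mpr hne
    have hE : (H.edgeSet.ncard : ℝ) ≤ G.edgeSet.ncard := by
      exact_mod_cast Set.ncard_le_ncard H.edgeSet_subset (Set.toFinite _)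
    calc 2 * (H.edgeSet.ncard : ℝ) / H.verts.ncard ≤ 2 * H.edgeSet.ncard :=
          div_le_self (by positivity) hV
      _ ≤ 2 * G.edgeSet.ncard := by gcongr
  refine le_csSup hbdd ⟨⊤, Set.univ_nonempty, ?_⟩
  rw [Subgraph.edgeSet_top, Subgraph.verts_top, Set.ncard_univ, Nat.card_eq_fintype_card,
    ← coe_edgeFinset, Set.ncard_coe_finset]

theorem three_mul_sum_degree_lt_of_mad_lt [Nonempty V] (h : mad G < 8 / 3) :
    3 * ∑ v, G.degree v < 8 * Fintype.card V := by
  have hlt := (two_mul_card_edgeFinset_div_le_mad G).trans_lt h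
  rw [div_lt_iff₀ (by exact_mod_cast Fintype.card_pos)] at hlt
  rw [sum_degrees_eq_twice_card_edges]
  exact_mod_cast (by linarith : (3 * (2 * #G.edgeFinset) : ℝ) < 8 * Fintype.card V)

end MaximumAverageDegree

section Discharging

variable {V : Type} [Fintype V] [DecidableEq V] (G : SimpleGraph V) [DecidableRel G.Adj]

structure AvoidsReducibleConfigs : Prop where
  two_le_degree : ∀ v, 2 ≤ G.degree v
  no_adj_degree_two : ¬ ∃ v w, G.Adj v w ∧ G.degree v = 2 ∧ G.degree w = 2
  no_oneOneOne : ¬ ∃ v, G.degree v = 3 ∧ ∀ u ∈ G.neighborFinset v, G.degree u = 2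
  no_two_and_oneOneZero_neighbors : ¬ ∃ v w t, G.degree v = 3 ∧ G.Adj v w ∧
    G.degree w = 2 ∧ G.Adj v t ∧ IsOneOneZeroVertex G t
  no_two_oneOneZero_and_three_neighbors : ¬ ∃ u v w t, G.degree u = 3 ∧ G.Adj u v ∧
    G.Adj u w ∧ G.Adj u t ∧ v ≠ w ∧ v ≠ t ∧ w ≠ t ∧ IsOneOneZeroVertex G v ∧
    IsOneOneZeroVertex G w ∧ G.degree t = 3

instance : DecidablePred (IsOneOneZeroVertex G) :=
  fun _ => inferInstanceAs (Decidable (_ ∧ _))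

def SendsCharge (u v : V) : Prop :=
  G.Adj u v ∧ (G.degree v = 2 ∨ 4 ≤ G.degree u ∨
    (G.degree u = 3 ∧ ¬ IsOneOneZeroVertex G u ∧ IsOneOneZeroVertex G v))

instance : DecidableRel (SendsCharge G) :=
  fun _ _ => inferInstanceAs (Decidable (_ ∧ _))

def chargeSent (u : V) : ℕ := #{v | SendsCharge G u v}

def chargeReceived (u : V) : ℕ := #{v | SendsCharge G v u}

theorem sum_chargeSent_eq_sum_chargeReceived :
    ∑ u, chargeSent G u = ∑ u, chargeReceived G u :=
  sum_card_bipartiteAbove_eq_sum_card_bipartiteBelow _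

theorem chargeSent_le_degree (u : V) : chargeSent G u ≤ G.degree u := by
  rw [← card_neighborFinset_eq_degree, neighborFinset_eq_filter]
  exact card_le_card fun v hv => mem_filter.mpr ⟨mem_univ _, (mem_filter.mp hv).2.1⟩

theorem one_le_chargeReceived {u v : V} (h : SendsCharge G v u) : 1 ≤ chargeReceived G u :=
  card_pos.mpr ⟨v, mem_filter.mpr ⟨mem_univ _, h⟩⟩

theorem chargeReceived_eq_degree_of_degree_eq_two {u : V} (hu : G.degree u = 2) :
    chargeReceived G u = G.degree u := by
  rw [← card_neighborFinset_eq_degree, neighborFinset_eq_filter, chargeReceived]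
  refine congrArg card (filter_congr fun v _ => ?_)
  simp [SendsCharge, hu, G.adj_comm]

theorem chargeSent_eq_zero_of_degree_eq_two {u : V} (hu : G.degree u = 2)
    (h : ∀ v, G.Adj u v → G.degree v ≠ 2) : chargeSent G u = 0 := by
  rw [chargeSent, card_eq_zero, filter_eq_empty_iff]
  intro v _ hsend
  obtain ⟨huv, hv | hu4 | ⟨hu3, -⟩⟩ := hsend
  · exact h v huv hv
  all_goals omega

namespace AvoidsReducibleConfigs

variable {G}

theorem card_degree_two_neighbors_le_two (hG : AvoidsReducibleConfigs G) {u : V}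
    (hu : G.degree u = 3) : #{v ∈ G.neighborFinset u | G.degree v = 2} ≤ 2 := by
  by_contra! h
  have hall : #{v ∈ G.neighborFinset u | G.degree v = 2} = #(G.neighborFinset u) := by
    have := card_filter_le (G.neighborFinset u) (fun v => G.degree v = 2)
    rw [card_neighborFinset_eq_degree] at this ⊢
    omega
  exact hG.no_oneOneOne ⟨u, hu, card_filter_eq_iff.mp hall⟩

theorem chargeSent_eq_card_degree_two_neighbors (hG : AvoidsReducibleConfigs G) {u s : V}
    (hu : G.degree u = 3) (hs : G.Adj u s) (hs2 : G.degree s = 2) :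
    chargeSent G u = #{v ∈ G.neighborFinset u | G.degree v = 2} := by
  rw [neighborFinset_eq_filter, filter_filter, chargeSent]
  refine congrArg card (filter_congr fun v _ => ?_)
  refine ⟨fun ⟨huv, h⟩ => ⟨huv, ?_⟩, fun ⟨huv, h⟩ => ⟨huv, Or.inl h⟩⟩
  obtain h | h | ⟨-, -, hv⟩ := h
  · exact h
  · omega
  · exact absurd ⟨u, s, v, hu, hs, hs2, huv, hv⟩ hG.no_two_and_oneOneZero_neighbors

theorem sendsCharge_of_adj_isOneOneZeroVertex (hG : AvoidsReducibleConfigs G) {u w : V}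
    (hu : IsOneOneZeroVertex G u) (hwu : G.Adj w u) (hw : G.degree w ≠ 2) :
    SendsCharge G w u := by
  refine ⟨hwu, Or.inr ?_⟩
  obtain hw3 | hw4 : G.degree w = 3 ∨ 4 ≤ G.degree w := by
    have := hG.two_le_degree w
    omega
  · refine Or.inr ⟨hw3, fun hw' => ?_, hu⟩
    obtain ⟨s, hs⟩ : {s ∈ G.neighborFinset w | G.degree s = 2}.Nonempty := by
      rw [← card_pos, hw'.2]
      norm_num
    rw [mem_filter, mem_neighborFinset] at hs
    exact hG.no_two_and_oneOneZero_neighbors ⟨w, s, u, hw3, hs.1, hs.2, hwu, hu⟩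
  · exact Or.inl hw4

theorem one_le_chargeReceived_of_isOneOneZeroVertex (hG : AvoidsReducibleConfigs G) {u : V}
    (hu : IsOneOneZeroVertex G u) : 1 ≤ chargeReceived G u := by
  obtain ⟨w, hw, hw2⟩ := exists_mem_notMem_of_card_lt_card
    (s := {v ∈ G.neighborFinset u | G.degree v = 2}) (t := G.neighborFinset u)
    (by rw [hu.2, card_neighborFinset_eq_degree, hu.1]; norm_num)
  rw [mem_neighborFinset] at hw
  exact one_le_chargeReceived G (sendsCharge_of_adj_isOneOneZeroVertex hG hu hw.symm
    fun h => hw2 (mem_filter.mpr ⟨(G.mem_neighborFinset u w).mpr hw, h⟩))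

theorem chargeSent_eq_card_oneOneZero_neighbors {u : V} (hu : G.degree u = 3)
    (h : ∀ v, G.Adj u v → G.degree v ≠ 2) :
    chargeSent G u = #{v ∈ G.neighborFinset u | IsOneOneZeroVertex G v} := by
  have hu' : ¬ IsOneOneZeroVertex G u := fun hu' => by
    have hempty : {v ∈ G.neighborFinset u | G.degree v = 2} = ∅ :=
      filter_eq_empty_iff.mpr fun v hv => h v ((G.mem_neighborFinset u v).mp hv)
    have := hu'.2
    rw [hempty, card_empty] at this
    omega
  rw [neighborFinset_eq_filter, filter_filter, chargeSent]
  refine congrArg card (filter_congr fun v _ => ?_)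
  refine ⟨fun ⟨huv, hv⟩ => ⟨huv, ?_⟩, fun ⟨huv, hv⟩ => ⟨huv, Or.inr (Or.inr ⟨hu, hu', hv⟩)⟩⟩
  obtain hv | hv | ⟨-, -, hv⟩ := hv
  · exact absurd hv (h v huv)
  · omega
  · exact hv

theorem exists_adj_four_le_degree (hG : AvoidsReducibleConfigs G) {u : V}
    (hu : G.degree u = 3) (h : ∀ v, G.Adj u v → G.degree v ≠ 2)
    (hcard : 1 < #{v ∈ G.neighborFinset u | IsOneOneZeroVertex G v}) :
    ∃ t, G.Adj u t ∧ 4 ≤ G.degree t := by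
  obtain ⟨v, hv, w, hw, hvw⟩ := one_lt_card.mp hcard
  rw [mem_filter, mem_neighborFinset] at hv hw
  obtain ⟨t, ht, htvw⟩ := exists_mem_notMem_of_card_lt_card (s := {v, w})
    (t := G.neighborFinset u) (by rw [card_pair hvw, card_neighborFinset_eq_degree, hu]; norm_num)
  rw [mem_neighborFinset] at ht
  rw [mem_insert, mem_singleton, not_or] at htvw
  obtain ⟨htv, htw⟩ := htvw
  refine ⟨t, ht, ?_⟩
  have ht3 : G.degree t ≠ 3 := fun ht3 => hG.no_two_oneOneZero_and_three_neighbors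
    ⟨u, v, w, t, hu, hv.1, hw.1, ht, hvw, Ne.symm htv, Ne.symm htw, hv.2, hw.2, ht3⟩
  have := hG.two_le_degree t
  have := h t ht
  omega

theorem chargeSent_le_chargeReceived_add_one (hG : AvoidsReducibleConfigs G) {u : V}
    (hu : G.degree u = 3) : chargeSent G u ≤ chargeReceived G u + 1 := by
  by_cases hs : ∃ s, G.Adj u s ∧ G.degree s = 2
  · obtain ⟨s, hs, hs2⟩ := hs
    rw [chargeSent_eq_card_degree_two_neighbors hG hu hs hs2]
    obtain hlt | heq := (card_degree_two_neighbors_le_two hG hu).lt_or_eq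
    · omega
    · have := one_le_chargeReceived_of_isOneOneZeroVertex hG ⟨hu, heq⟩
      omega
  · push Not at hs
    rw [chargeSent_eq_card_oneOneZero_neighbors hu hs]
    by_cases hcard : #{v ∈ G.neighborFinset u | IsOneOneZeroVertex G v} ≤ 1
    · omega
    obtain ⟨t, ht, ht4⟩ := exists_adj_four_le_degree hG hu hs (by omega)
    have hsub : {v ∈ G.neighborFinset u | IsOneOneZeroVertex G v} ⊆
        (G.neighborFinset u).erase t := fun v hv => by
      rw [mem_filter] at hv
      refine mem_erase.mpr ⟨?_, hv.1⟩
      rintro rfl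
      have := hv.2.1
      omega
    have hle := card_le_card hsub
    rw [card_erase_of_mem ((G.mem_neighborFinset u t).mpr ht),
      card_neighborFinset_eq_degree, hu] at hle
    have := one_le_chargeReceived G (u := u) ⟨ht.symm, Or.inr (Or.inl ht4)⟩
    omega

theorem chargeSent_add_eight_le (hG : AvoidsReducibleConfigs G) (u : V) :
    chargeSent G u + 8 ≤ 3 * G.degree u + chargeReceived G u := by
  obtain hu | hu | hu : G.degree u = 2 ∨ G.degree u = 3 ∨ 4 ≤ G.degree u := by
    have := hG.two_le_degree u
    omega
  · rw [chargeSent_eq_zero_of_degree_eq_two G hu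
      fun v huv hv => hG.no_adj_degree_two ⟨u, v, huv, hu, hv⟩,
      chargeReceived_eq_degree_of_degree_eq_two G hu]
    omega
  · have := chargeSent_le_chargeReceived_add_one hG hu
    omega
  · have := chargeSent_le_degree G u
    omega

end AvoidsReducibleConfigs

end Discharging

theorem no_reduced_graph_general
    {V : Type} [Fintype V] [Nonempty V] [DecidableEq V] (G : SimpleGraph V)
    [DecidableRel G.Adj]
    (hmad : mad G < 8 / 3)
    (hmin : ∀ v : V, 2 ≤ G.degree v)
    (hno2path : ¬ ∃ v w, G.Adj v w ∧ G.degree v = 2 ∧ G.degree w = 2)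
    (hno111 : ¬ ∃ v, G.degree v = 3 ∧ ∀ u ∈ G.neighborFinset v, G.degree u = 2)
    (hnoA : ¬ ∃ v w t, G.degree v = 3 ∧ G.Adj v w ∧ G.degree w = 2 ∧
      G.Adj v t ∧ IsOneOneZeroVertex G t)
    (hnoB : ¬ ∃ u v w t, G.degree u = 3 ∧ G.Adj u v ∧ G.Adj u w ∧ G.Adj u t ∧
      v ≠ w ∧ v ≠ t ∧ w ≠ t ∧ IsOneOneZeroVertex G v ∧ IsOneOneZeroVertex G w ∧
      G.degree t = 3) :
    False := by
  have hG : AvoidsReducibleConfigs G := ⟨hmin, hno2path, hno111, hnoA, hnoB⟩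
  have hlocal := sum_le_sum fun u (_ : u ∈ univ) => hG.chargeSent_add_eight_le u
  rw [sum_add_distrib, sum_add_distrib, sum_chargeSent_eq_sum_chargeReceived, ← mul_sum,
    sum_const, card_univ, smul_eq_mul] at hlocal
  have := three_mul_sum_degree_lt_of_mad_lt G hmad
  omega

/-- Discharging conclusion of Section 2: there is no nonempty graph with
`mad < 8/3`, minimum degree at least 2, no `2⁺`-path, no `(1,1,1)`-vertex,
no 3-vertex with both a 2-neighbor and a `(1,1,0)`-neighbor, no 3-vertex with two
`(1,1,0)`-neighbors and a further 3-neighbor, and maximum degree at most `Δ`. -/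
theorem no_reduced_graph
    {V : Type} [Fintype V] [Nonempty V] [DecidableEq V] (G : SimpleGraph V)
    [DecidableRel G.Adj] (Δ : ℕ)
    (hmad : mad G < 8 / 3)
    (hmin : ∀ v : V, 2 ≤ G.degree v)
    (hΔ : G.maxDegree ≤ Δ)
    (hno2path : ¬ ∃ v w, G.Adj v w ∧ G.degree v = 2 ∧ G.degree w = 2)
    (hno111 : ¬ ∃ v, G.degree v = 3 ∧ ∀ u ∈ G.neighborFinset v, G.degree u = 2)
    (hnoA : ¬ ∃ v w t, G.degree v = 3 ∧ G.Adj v w ∧ G.degree w = 2 ∧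
      G.Adj v t ∧ IsOneOneZeroVertex G t)
    (hnoB : ¬ ∃ u v w t, G.degree u = 3 ∧ G.Adj u v ∧ G.Adj u w ∧ G.Adj u t ∧
      v ≠ w ∧ v ≠ t ∧ w ≠ t ∧ IsOneOneZeroVertex G v ∧ IsOneOneZeroVertex G w ∧
      G.degree t = 3) :
    False :=
  no_reduced_graph_general G hmad hmin hno2path hno111 hnoA hnoB
end

section
/- If G is a graph with mad(G) < 14/5 and maximum degree Δ ≥ 6, then G is 2-distance (Δ+3)-choosable. -/
open SimpleGraph

namespace MadAux

open Finset

variable {V : Type} [Fintype V] [DecidableEq V]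

lemma twoDistAdj_symm {G : SimpleGraph V} {u v : V} (h : TwoDistAdj G u v) :
    TwoDistAdj G v u := by
  obtain ⟨hne, h⟩ := h
  refine ⟨hne.symm, ?_⟩
  rcases h with h | ⟨w, h1, h2⟩
  · exact Or.inl h.symm
  · exact Or.inr ⟨w, h2.symm, h1.symm⟩

instance {G : SimpleGraph V} [DecidableRel G.Adj] : DecidablePred (fun p : V × V => TwoDistAdj G p.1 p.2) := by
  intro p
  unfold TwoDistAdj
  infer_instance

instance decTwoDist {G : SimpleGraph V} [DecidableRel G.Adj] (v : V) :
    DecidablePred (fun u => TwoDistAdj G u v) := by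
  intro u
  unfold TwoDistAdj
  infer_instance

section Discharge

variable (G : SimpleGraph V) [DecidableRel G.Adj] (S : Finset V)

/-- number of neighbours in `S`. -/
def tS (u : V) : ℕ := (G.neighborFinset u ∩ S).card

/-- hub set. -/
def US : Finset V := Finset.univ.filter (fun u => u ∉ S ∧ 2 ≤ tS G S u)

def WS : Finset V := S ∪ US G S

/-- neighbourhood in the auxiliary subgraph `H`. -/
def nH (w : V) : Finset V := (G.neighborFinset w ∩ WS G S).filter (fun u => w ∈ S ∨ u ∈ S)

def dH (w : V) : ℕ := (nH G S w).card

def payS2 (x : V) : ℤ :=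
  if tS G S x = 3 then 30 else if tS G S x = 4 then (if x ∈ S then 36 else 30)
  else if tS G S x = 5 then 44 else if 6 ≤ tS G S x then 50 else 0

def pay (x y : V) : ℤ :=
  if 7 ≤ dH G S x then 60
  else if y ∈ S ∧ dH G S y = 2 then payS2 G S x
  else if y ∉ S ∧ dH G S y = 2 then 40
  else if y ∈ S ∧ dH G S y = 3 then
    (if tS G S x = 4 then 12 else if 5 ≤ tS G S x then 40 else 0)
  else 0

variable {G S}

lemma mem_nbr {w u : V} : u ∈ G.neighborFinset w ↔ G.Adj w u := by simp

lemma payS2_nonneg (x : V) : 0 ≤ payS2 G S x := by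
  unfold payS2; split_ifs <;> norm_num

lemma payS2_le (x : V) : payS2 G S x ≤ 50 := by
  unfold payS2; split_ifs <;> norm_num

lemma pay_nonneg (x y : V) : 0 ≤ pay G S x y := by
  have h := payS2_nonneg (G := G) (S := S) x
  unfold pay; split_ifs <;> linarith

lemma pay_le_60 (x y : V) : pay G S x y ≤ 60 := by
  have h := payS2_le (G := G) (S := S) x
  unfold pay; split_ifs <;> linarith

lemma mem_nH {w u : V} : u ∈ nH G S w ↔ G.Adj w u ∧ u ∈ WS G S ∧ (w ∈ S ∨ u ∈ S) := by
  unfold nH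
  simp only [Finset.mem_filter, Finset.mem_inter, SimpleGraph.mem_neighborFinset]
  tauto

lemma S_subset_WS : S ⊆ WS G S := Finset.subset_union_left

lemma nH_subset_WS {w : V} : nH G S w ⊆ WS G S := fun u hu => (mem_nH.mp hu).2.1

lemma nH_symm {w u : V} (hw : w ∈ WS G S) (hu : u ∈ nH G S w) : w ∈ nH G S u := by
  obtain ⟨hadj, hu', hcond⟩ := mem_nH.mp hu
  exact mem_nH.mpr ⟨hadj.symm, hw, hcond.symm⟩

lemma nH_inter_S {w : V} : nH G S w ∩ S = G.neighborFinset w ∩ S := by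
  ext u
  simp only [Finset.mem_inter, mem_nbr]
  constructor
  · rintro ⟨hu, huS⟩
    exact ⟨(mem_nH.mp hu).1, huS⟩
  · rintro ⟨hadj, huS⟩
    exact ⟨mem_nH.mpr ⟨hadj, S_subset_WS huS, Or.inr huS⟩, huS⟩

lemma tS_eq_card_nH_inter_S {w : V} : tS G S w = (nH G S w ∩ S).card := by
  rw [nH_inter_S]; rfl

lemma tS_le_dH (w : V) : tS G S w ≤ dH G S w := by
  rw [tS_eq_card_nH_inter_S]
  exact Finset.card_le_card Finset.inter_subset_left

lemma tS_le_maxDegree (u : V) : tS G S u ≤ G.maxDegree := by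
  calc tS G S u ≤ (G.neighborFinset u).card := Finset.card_le_card Finset.inter_subset_left
    _ = G.degree u := rfl
    _ ≤ G.maxDegree := G.degree_le_maxDegree u

lemma tS_pos_of_adj {v u : V} (hv : v ∈ S) (hadj : G.Adj u v) : 1 ≤ tS G S u :=
  Finset.card_pos.mpr ⟨v, Finset.mem_inter.mpr ⟨mem_nbr.mpr hadj, hv⟩⟩

lemma nH_of_not_mem_S {w : V} (hw : w ∉ S) : nH G S w = G.neighborFinset w ∩ S := by
  ext u
  rw [mem_nH]
  simp only [Finset.mem_inter, mem_nbr]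
  constructor
  · rintro ⟨hadj, _, hcond⟩
    exact ⟨hadj, hcond.resolve_left hw⟩
  · rintro ⟨hadj, huS⟩
    exact ⟨hadj, S_subset_WS huS, Or.inr huS⟩

lemma dH_eq_tS_of_US {w : V} (hw : w ∈ US G S) : dH G S w = tS G S w := by
  have hwS : w ∉ S := (Finset.mem_filter.mp hw).2.1
  unfold dH
  rw [nH_of_not_mem_S hwS]; rfl

lemma mem_US_iff {u : V} : u ∈ US G S ↔ u ∉ S ∧ 2 ≤ tS G S u := by
  unfold US; simp

lemma mem_WS_iff {u : V} : u ∈ WS G S ↔ u ∈ S ∨ (u ∉ S ∧ 2 ≤ tS G S u) := by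
  unfold WS; rw [Finset.mem_union, mem_US_iff]

/-- the fundamental counting inequality coming from the bad-set hypothesis. -/
lemma C1 (hbad : ∀ v ∈ S, G.maxDegree + 3 ≤ (S.filter (fun u => TwoDistAdj G u v)).card)
    {v : V} (hv : v ∈ S) :
    G.maxDegree + 3 + dH G S v ≤ (∑ u ∈ nH G S v, tS G S u) + tS G S v := by
  have hsub : S.filter (fun u => TwoDistAdj G u v) ⊆
      (G.neighborFinset v ∩ S) ∪
        (G.neighborFinset v).biUnion (fun w => (G.neighborFinset w ∩ S).erase v) := by
    intro u hu
    have h := Finset.mem_filter.mp hu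
    have huS := h.1
    have hne := h.2.1
    have hcase := h.2.2
    rcases hcase with hadj | ⟨w, h1, h2⟩
    · exact Finset.mem_union_left _ (Finset.mem_inter.mpr
        ⟨mem_nbr.mpr hadj.symm, huS⟩)
    · refine Finset.mem_union_right _ (Finset.mem_biUnion.mpr ⟨w, ?_, ?_⟩)
      · exact mem_nbr.mpr h2.symm
      · exact Finset.mem_erase.mpr ⟨hne, Finset.mem_inter.mpr
          ⟨mem_nbr.mpr h1.symm, huS⟩⟩
  have hcard : G.maxDegree + 3 ≤ tS G S v +
      ∑ w ∈ G.neighborFinset v, ((G.neighborFinset w ∩ S).erase v).card := by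
    calc G.maxDegree + 3 ≤ (S.filter (fun u => TwoDistAdj G u v)).card := hbad v hv
      _ ≤ ((G.neighborFinset v ∩ S) ∪
            (G.neighborFinset v).biUnion (fun w => (G.neighborFinset w ∩ S).erase v)).card :=
          Finset.card_le_card hsub
      _ ≤ (G.neighborFinset v ∩ S).card +
            ((G.neighborFinset v).biUnion (fun w => (G.neighborFinset w ∩ S).erase v)).card :=
          Finset.card_union_le _ _
      _ ≤ tS G S v + ∑ w ∈ G.neighborFinset v, ((G.neighborFinset w ∩ S).erase v).card := by
          exact Nat.add_le_add le_rfl (Finset.card_biUnion_le)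
  have herase : ∀ w ∈ G.neighborFinset v, ((G.neighborFinset w ∩ S).erase v).card
      = tS G S w - 1 := by
    intro w hw
    have hvmem : v ∈ G.neighborFinset w ∩ S := Finset.mem_inter.mpr
      ⟨mem_nbr.mpr (mem_nbr.mp hw).symm, hv⟩
    rw [Finset.card_erase_of_mem hvmem]; rfl
  have hsum1 : ∑ w ∈ G.neighborFinset v, ((G.neighborFinset w ∩ S).erase v).card
      = ∑ w ∈ G.neighborFinset v, (tS G S w - 1) := Finset.sum_congr rfl herase
  have hsub2 : nH G S v ⊆ G.neighborFinset v := fun u hu =>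
    mem_nbr.mpr (mem_nH.mp hu).1
  have hsum2 : ∑ w ∈ G.neighborFinset v, (tS G S w - 1) = ∑ w ∈ nH G S v, (tS G S w - 1) := by
    refine (Finset.sum_subset hsub2 ?_).symm
    intro w hw hwn
    have hadj : G.Adj v w := mem_nbr.mp hw
    have : w ∉ WS G S := by
      intro hWS
      exact hwn (mem_nH.mpr ⟨hadj, hWS, Or.inl hv⟩)
    rw [mem_WS_iff] at this
    push_neg at this
    have h1 : tS G S w ≤ 1 := by
      have h2 := this.2 this.1
      omega
    omega
  have hpos : ∀ w ∈ nH G S v, 1 ≤ tS G S w := by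
    intro w hw
    exact tS_pos_of_adj hv ((mem_nH.mp hw).1.symm)
  have hsum3 : ∑ w ∈ nH G S v, (tS G S w - 1) + dH G S v = ∑ w ∈ nH G S v, tS G S w := by
    have h5 : ∑ w ∈ nH G S v, (tS G S w - 1) + ∑ _w ∈ nH G S v, 1 = ∑ w ∈ nH G S v, tS G S w := by
      rw [← Finset.sum_add_distrib]
      refine Finset.sum_congr rfl fun w hw => ?_
      have := hpos w hw
      omega
    have h6 : dH G S v = ∑ _w ∈ nH G S v, 1 := by
      unfold dH; rw [Finset.card_eq_sum_ones]
    rw [h6]; exact h5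
  omega

lemma conserv : ∑ w ∈ WS G S, ∑ u ∈ nH G S w, (pay G S u w - pay G S w u) = 0 := by
  have h1 : ∀ w ∈ WS G S, ∑ u ∈ nH G S w, (pay G S u w - pay G S w u)
      = ∑ u ∈ WS G S, (if u ∈ nH G S w then pay G S u w - pay G S w u else 0) := by
    intro w hw
    rw [Finset.sum_ite_mem]
    congr 1
    exact (Finset.inter_eq_right.mpr nH_subset_WS).symm
  rw [Finset.sum_congr rfl h1]
  set T := ∑ w ∈ WS G S, ∑ u ∈ WS G S,
    (if u ∈ nH G S w then pay G S u w - pay G S w u else 0) with hT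
  have h5 : T = ∑ w ∈ WS G S, ∑ u ∈ WS G S,
      (if w ∈ nH G S u then pay G S w u - pay G S u w else 0) := by
    rw [hT]
    exact Finset.sum_comm
  have h6 : T + T = 0 := by
    nth_rewrite 2 [h5]
    rw [hT, ← Finset.sum_add_distrib]
    refine Finset.sum_eq_zero fun w hw => ?_
    rw [← Finset.sum_add_distrib]
    refine Finset.sum_eq_zero fun u hu => ?_
    by_cases h : u ∈ nH G S w
    · have h' : w ∈ nH G S u := nH_symm hw h
      rw [if_pos h, if_pos h']
      ring
    · have h' : w ∉ nH G S u := fun hc => h (nH_symm hu hc)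
      rw [if_neg h, if_neg h']
      ring
  linarith


/-! ### pointwise value lemmas for `pay` -/

lemma pay_rich {u w : V} (h : 7 ≤ dH G S u) : pay G S u w = 60 := by
  unfold pay; rw [if_pos h]

lemma pay_to_S2 {u w : V} (hw : w ∈ S) (h2 : dH G S w = 2) (hu : ¬ 7 ≤ dH G S u) :
    pay G S u w = payS2 G S u := by
  unfold pay; rw [if_neg hu, if_pos ⟨hw, h2⟩]

lemma pay_to_S3 {u w : V} (hw : w ∈ S) (h3 : dH G S w = 3) (hu : ¬ 7 ≤ dH G S u) :
    pay G S u w = (if tS G S u = 4 then 12 else if 5 ≤ tS G S u then 40 else 0) := by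
  unfold pay
  rw [if_neg hu, if_neg (by simp [h3]), if_neg (by simp [h3, hw]), if_pos ⟨hw, h3⟩]

lemma pay_to_U2 {u w : V} (hw : w ∉ S) (h2 : dH G S w = 2) :
    pay G S u w = (if 7 ≤ dH G S u then 60 else 40) := by
  unfold pay
  by_cases hu : 7 ≤ dH G S u
  · rw [if_pos hu, if_pos hu]
  · rw [if_neg hu, if_neg hu, if_neg (by simp [hw]), if_pos ⟨hw, h2⟩]

lemma pay_from_to_S2 {u w : V} (hw : ¬ 7 ≤ dH G S w) (hu : u ∈ S) (h2 : dH G S u = 2) :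
    pay G S w u = payS2 G S w := by
  unfold pay; rw [if_neg hw, if_pos ⟨hu, h2⟩]

lemma pay_from_to_U2 {u w : V} (hw : ¬ 7 ≤ dH G S w) (hu : u ∉ S) (h2 : dH G S u = 2) :
    pay G S w u = 40 := by
  unfold pay; rw [if_neg hw, if_neg (by simp [hu]), if_pos ⟨hu, h2⟩]

lemma pay_from_to_S3 {u w : V} (hw : ¬ 7 ≤ dH G S w) (hu : u ∈ S) (h3 : dH G S u = 3) :
    pay G S w u = (if tS G S w = 4 then 12 else if 5 ≤ tS G S w then 40 else 0) := by
  unfold pay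
  rw [if_neg hw, if_neg (by simp [h3]), if_neg (by simp [h3]), if_pos ⟨hu, h3⟩]

lemma pay_from_zero {u w : V} (hw : ¬ 7 ≤ dH G S w) (hu2 : dH G S u ≠ 2)
    (hu3 : ¬ (u ∈ S ∧ dH G S u = 3)) :
    pay G S w u = 0 := by
  unfold pay
  rw [if_neg hw, if_neg (fun h => hu2 h.2), if_neg (fun h => hu2 h.2), if_neg hu3]

lemma payS2_low {x : V} (h : tS G S x ≤ 2) : payS2 G S x = 0 := by
  unfold payS2; split_ifs <;> omega

lemma payS2_t3 {x : V} (h : tS G S x = 3) : payS2 G S x = 30 := by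
  unfold payS2; rw [if_pos h]

lemma payS2_t4S {x : V} (h : tS G S x = 4) (hx : x ∈ S) : payS2 G S x = 36 := by
  unfold payS2; rw [if_neg (by omega), if_pos h, if_pos hx]

lemma payS2_t4U {x : V} (h : tS G S x = 4) (hx : x ∉ S) : payS2 G S x = 30 := by
  unfold payS2; rw [if_neg (by omega), if_pos h, if_neg hx]

lemma payS2_t5 {x : V} (h : tS G S x = 5) : payS2 G S x = 44 := by
  unfold payS2; rw [if_neg (by omega), if_neg (by omega), if_pos h]

lemma payS2_t6 {x : V} (h : 6 ≤ tS G S x) : payS2 G S x = 50 := by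
  unfold payS2; rw [if_neg (by omega), if_neg (by omega), if_neg (by omega), if_pos h]

lemma payS2_ge30 {x : V} (h : 3 ≤ tS G S x) : 30 ≤ payS2 G S x := by
  unfold payS2; split_ifs <;> omega

/-! ### structural lemmas -/

/-- number of `U`-neighbours of an `S`-vertex. -/
lemma card_nonS_nbrs {w : V} (hw : w ∈ S) :
    ((nH G S w).filter (fun u => u ∉ S)).card = dH G S w - tS G S w := by
  have h1 : ((nH G S w).filter (fun u => u ∈ S)).card +
      ((nH G S w).filter (fun u => u ∉ S)).card = dH G S w :=
    Finset.card_filter_add_card_filter_not (fun u => u ∈ S)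
  have h2 : (nH G S w).filter (fun u => u ∈ S) = nH G S w ∩ S := by
    ext u; simp [Finset.mem_filter, Finset.mem_inter]
  rw [h2] at h1
  rw [← tS_eq_card_nH_inter_S] at h1
  omega

/-- individual neighbour bound from `C1`. -/
lemma nbr_t_lb (hbad : ∀ v ∈ S, G.maxDegree + 3 ≤ (S.filter (fun u => TwoDistAdj G u v)).card)
    {w u : V} (hw : w ∈ S) (hu : u ∈ nH G S w) :
    G.maxDegree + 3 + dH G S w ≤ tS G S u + G.maxDegree * (dH G S w - 1) + tS G S w := by
  have hC1 := C1 hbad hw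
  have hsplit : ∑ x ∈ nH G S w, tS G S x
      = tS G S u + ∑ x ∈ (nH G S w).erase u, tS G S x := by
    rw [Finset.add_sum_erase _ _ hu]
  have hbound : ∑ x ∈ (nH G S w).erase u, tS G S x ≤ (dH G S w - 1) * G.maxDegree := by
    calc ∑ x ∈ (nH G S w).erase u, tS G S x
        ≤ ((nH G S w).erase u).card * G.maxDegree := by
          apply Finset.sum_le_card_nsmul
          intro x _
          exact tS_le_maxDegree x
      _ = (dH G S w - 1) * G.maxDegree := by
          rw [Finset.card_erase_of_mem hu]; rfl
  have := hsplit ▸ hC1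
  nlinarith [Nat.mul_comm (dH G S w - 1) G.maxDegree]

/-- an `S`-vertex of `H`-degree 2 with a neighbour outside `S` has `t ≤ 1`. -/
lemma tS_le_one_of_nonS_nbr {z w : V} (hz : z ∈ S) (hw : w ∈ nH G S z) (hwS : w ∉ S) :
    tS G S z + 1 ≤ dH G S z := by
  have h1 := card_nonS_nbrs (G := G) hz
  have h2 : 1 ≤ ((nH G S z).filter (fun u => u ∉ S)).card :=
    Finset.card_pos.mpr ⟨w, Finset.mem_filter.mpr ⟨hw, hwS⟩⟩
  have h3 := tS_le_dH (G := G) (S := S) z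
  omega

/-- neighbours of a degree-2 `S`-vertex have `t ≥ 5 - t z`, and `≥ 4` if outside `S`. -/
lemma S2_nbr_t (hΔ : 6 ≤ G.maxDegree)
    (hbad : ∀ v ∈ S, G.maxDegree + 3 ≤ (S.filter (fun u => TwoDistAdj G u v)).card)
    {z w : V} (hz : z ∈ S) (h2 : dH G S z = 2) (hw : w ∈ nH G S z) :
    5 ≤ tS G S w + tS G S z ∧ (w ∉ S → 4 ≤ tS G S w) := by
  have h1 := nbr_t_lb hbad hz hw
  rw [h2] at h1
  have h3 := tS_le_dH (G := G) (S := S) z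
  constructor
  · omega
  · intro hwS
    have h4 := tS_le_one_of_nonS_nbr hz hw hwS
    omega

lemma dH_ge_two_S (hΔ : 6 ≤ G.maxDegree)
    (hbad : ∀ v ∈ S, G.maxDegree + 3 ≤ (S.filter (fun u => TwoDistAdj G u v)).card)
    {w : V} (hw : w ∈ S) : 2 ≤ dH G S w := by
  have hC1 := C1 hbad hw
  have h1 : ∑ x ∈ nH G S w, tS G S x ≤ dH G S w * G.maxDegree := by
    apply Finset.sum_le_card_nsmul
    intro x _
    exact tS_le_maxDegree x
  have h2 := tS_le_dH (G := G) (S := S) w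
  by_contra h
  push_neg at h
  have h4 : dH G S w * G.maxDegree ≤ 1 * G.maxDegree :=
    Nat.mul_le_mul_right _ (by omega)
  have h5 : 1 * G.maxDegree = G.maxDegree := one_mul _
  omega

lemma tS_le_six_small {u : V} (hu : u ∈ WS G S) (h : ¬ 7 ≤ dH G S u) : tS G S u ≤ 6 := by
  have := tS_le_dH (G := G) (S := S) u
  omega


/-! ### fiberwise summation helpers -/

lemma sum_fiber_eq {N : Finset V} (cls : V → ℕ) (f : V → ℤ) (m : ℕ)
    (hcls : ∀ u ∈ N, cls u < m) :
    ∑ u ∈ N, f u = ∑ i ∈ Finset.range m, ∑ u ∈ N.filter (fun u => cls u = i), f u :=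
  (Finset.sum_fiberwise_of_maps_to (fun u hu => Finset.mem_range.mpr (hcls u hu)) f).symm

lemma sum_le_cls {N : Finset V} (cls : V → ℕ) (f : V → ℤ) (c : ℕ → ℤ) (m : ℕ)
    (hcls : ∀ u ∈ N, cls u < m) (hf : ∀ u ∈ N, f u ≤ c (cls u)) :
    ∑ u ∈ N, f u ≤
      ∑ i ∈ Finset.range m, c i * ((N.filter (fun u => cls u = i)).card : ℤ) := by
  rw [sum_fiber_eq cls f m hcls]
  refine Finset.sum_le_sum fun i _ => ?_
  calc ∑ u ∈ N.filter (fun u => cls u = i), f u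
      ≤ ∑ u ∈ N.filter (fun u => cls u = i), c i := by
        refine Finset.sum_le_sum fun u hu => ?_
        have h1 := (Finset.mem_filter.mp hu).2
        have h2 := hf u (Finset.mem_filter.mp hu).1
        rw [h1] at h2
        exact h2
    _ = c i * ((N.filter (fun u => cls u = i)).card : ℤ) := by
        rw [Finset.sum_const, nsmul_eq_mul, mul_comm]

lemma sum_ge_cls {N : Finset V} (cls : V → ℕ) (f : V → ℤ) (c : ℕ → ℤ) (m : ℕ)
    (hcls : ∀ u ∈ N, cls u < m) (hf : ∀ u ∈ N, c (cls u) ≤ f u) :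
    ∑ i ∈ Finset.range m, c i * ((N.filter (fun u => cls u = i)).card : ℤ) ≤
      ∑ u ∈ N, f u := by
  rw [sum_fiber_eq cls f m hcls]
  refine Finset.sum_le_sum fun i _ => ?_
  calc c i * ((N.filter (fun u => cls u = i)).card : ℤ)
      = ∑ u ∈ N.filter (fun u => cls u = i), c i := by
        rw [Finset.sum_const, nsmul_eq_mul, mul_comm]
    _ ≤ ∑ u ∈ N.filter (fun u => cls u = i), f u := by
        refine Finset.sum_le_sum fun u hu => ?_
        have h1 := (Finset.mem_filter.mp hu).2
        have h2 := hf u (Finset.mem_filter.mp hu).1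
        rw [h1] at h2
        exact h2

lemma sum_nat_le_cls {N : Finset V} (cls : V → ℕ) (f : V → ℕ) (c : ℕ → ℕ) (m : ℕ)
    (hcls : ∀ u ∈ N, cls u < m) (hf : ∀ u ∈ N, f u ≤ c (cls u)) :
    ∑ u ∈ N, f u ≤
      ∑ i ∈ Finset.range m, c i * (N.filter (fun u => cls u = i)).card := by
  have h0 : ∑ u ∈ N, f u = ∑ i ∈ Finset.range m, ∑ u ∈ N.filter (fun u => cls u = i), f u :=
    (Finset.sum_fiberwise_of_maps_to (fun u hu => Finset.mem_range.mpr (hcls u hu)) f).symm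
  rw [h0]
  refine Finset.sum_le_sum fun i _ => ?_
  calc ∑ u ∈ N.filter (fun u => cls u = i), f u
      ≤ ∑ u ∈ N.filter (fun u => cls u = i), c i := by
        refine Finset.sum_le_sum fun u hu => ?_
        have h1 := (Finset.mem_filter.mp hu).2
        have h2 := hf u (Finset.mem_filter.mp hu).1
        rw [h1] at h2
        exact h2
    _ = c i * (N.filter (fun u => cls u = i)).card := by
        rw [Finset.sum_const, smul_eq_mul, mul_comm]

lemma card_cls {N : Finset V} (cls : V → ℕ) (m : ℕ) (hcls : ∀ u ∈ N, cls u < m) :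
    ∑ i ∈ Finset.range m, (N.filter (fun u => cls u = i)).card = N.card := by
  have h0 : ∑ u ∈ N, (1 : ℕ) = ∑ i ∈ Finset.range m,
      ∑ u ∈ N.filter (fun u => cls u = i), (1 : ℕ) :=
    (Finset.sum_fiberwise_of_maps_to (fun u hu => Finset.mem_range.mpr (hcls u hu)) _).symm
  simp only [Finset.sum_const, smul_eq_mul, mul_one] at h0
  exact h0.symm

/-- per-vertex inequality, `S`-vertices of degree 2. -/
lemma mainIneqS2 (hΔ : 6 ≤ G.maxDegree)
    (hbad : ∀ v ∈ S, G.maxDegree + 3 ≤ (S.filter (fun u => TwoDistAdj G u v)).card)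
    {w : V} (hw : w ∈ WS G S) (hwS : w ∈ S) (hrich : ¬ 7 ≤ dH G S w)
    (hD : dH G S w = 2) :
    (280 : ℤ) ≤ 100 * dH G S w + ∑ u ∈ nH G S w, (pay G S u w - pay G S w u) := by
  have ht_le : tS G S w ≤ dH G S w := tS_le_dH w
  have hcard_eq : (nH G S w).card = dH G S w := rfl
  -- w pays nothing
  have hout : ∀ u ∈ nH G S w, pay G S w u = 0 := by
    intro u hu
    by_cases h2 : dH G S u = 2
    · by_cases hS : u ∈ S
      · rw [pay_from_to_S2 hrich hS h2, payS2_low (by omega)]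
      · exfalso
        have h5 := (S2_nbr_t hΔ hbad hwS hD hu).2 hS
        have h6 : tS G S u ≤ dH G S u := tS_le_dH u
        omega
    · by_cases h3 : u ∈ S ∧ dH G S u = 3
      · rw [pay_from_to_S3 hrich h3.1 h3.2, if_neg (by omega), if_neg (by omega)]
      · exact pay_from_zero hrich h2 h3
  have houtsum : ∑ u ∈ nH G S w, pay G S w u = 0 := Finset.sum_eq_zero hout
  have hsplitsum : ∑ u ∈ nH G S w, (pay G S u w - pay G S w u)
      = (∑ u ∈ nH G S w, pay G S u w) - (∑ u ∈ nH G S w, pay G S w u) :=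
    Finset.sum_sub_distrib _ _
  -- all neighbours have t ≥ 5 - t w ≥ 3
  have htlb : ∀ u ∈ nH G S w, 5 ≤ tS G S u + tS G S w :=
    fun u hu => (S2_nbr_t hΔ hbad hwS hD hu).1
  rw [hsplitsum, houtsum, hD]
  by_cases hall : ∀ u ∈ nH G S w, dH G S u < 7
  · -- partition by the t-value of the two neighbours
    have hC1 := C1 hbad hwS
    set cls : V → ℕ := fun u => if tS G S u = 3 then 0
      else if tS G S u = 4 then (if u ∈ S then 1 else 2)
      else if tS G S u = 5 then 3 else if 6 ≤ tS G S u then 4 else 5 with hcls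
    have hcv : ∀ u, (cls u = 0 ∧ tS G S u = 3) ∨ (cls u = 1 ∧ tS G S u = 4 ∧ u ∈ S)
        ∨ (cls u = 2 ∧ tS G S u = 4 ∧ u ∉ S) ∨ (cls u = 3 ∧ tS G S u = 5)
        ∨ (cls u = 4 ∧ 6 ≤ tS G S u) ∨ (cls u = 5 ∧ tS G S u ≤ 2) := by
      intro u
      rw [hcls]; dsimp only
      by_cases h3 : tS G S u = 3
      · exact Or.inl ⟨by rw [if_pos h3], h3⟩
      · by_cases h4 : tS G S u = 4
        · by_cases hS : u ∈ S
          · exact Or.inr (Or.inl ⟨by rw [if_neg h3, if_pos h4, if_pos hS], h4, hS⟩)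
          · exact Or.inr (Or.inr (Or.inl ⟨by rw [if_neg h3, if_pos h4, if_neg hS], h4, hS⟩))
        · by_cases h5 : tS G S u = 5
          · exact Or.inr (Or.inr (Or.inr (Or.inl ⟨by rw [if_neg h3, if_neg h4, if_pos h5], h5⟩)))
          · by_cases h6 : 6 ≤ tS G S u
            · exact Or.inr (Or.inr (Or.inr (Or.inr (Or.inl
                ⟨by rw [if_neg h3, if_neg h4, if_neg h5, if_pos h6], h6⟩))))
            · exact Or.inr (Or.inr (Or.inr (Or.inr (Or.inr
                ⟨by rw [if_neg h3, if_neg h4, if_neg h5, if_neg h6], by omega⟩))))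
    have hclsm : ∀ u ∈ nH G S w, cls u < 6 := by
      intro u _
      rcases hcv u with ⟨h,_⟩|⟨h,_⟩|⟨h,_⟩|⟨h,_⟩|⟨h,_⟩|⟨h,_⟩ <;> omega
    have hptT : ∀ u ∈ nH G S w, tS G S u ≤
        (fun i => if i = 0 then 3 else if i = 1 then 4 else if i = 2 then 4
          else if i = 3 then 5 else if i = 4 then 6 else 2) (cls u) := by
      intro u hu
      have h1 : tS G S u ≤ dH G S u := tS_le_dH u
      have h2 := hall u hu
      rcases hcv u with ⟨h,hp⟩|⟨h,hp,_⟩|⟨h,hp,_⟩|⟨h,hp⟩|⟨h,hp⟩|⟨h,hp⟩ <;>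
        rw [h] <;> norm_num <;> omega
    have hStU := sum_nat_le_cls (N := nH G S w) cls (tS G S)
      (fun i => if i = 0 then 3 else if i = 1 then 4 else if i = 2 then 4
        else if i = 3 then 5 else if i = 4 then 6 else 2) 6 hclsm hptT
    have hcards := card_cls (N := nH G S w) cls 6 hclsm
    have hk2 : ((nH G S w).filter (fun u => cls u = 2)).card ≤ dH G S w - tS G S w := by
      rw [← card_nonS_nbrs hwS]
      apply Finset.card_le_card
      intro u hu
      have h1 := Finset.mem_filter.mp hu
      refine Finset.mem_filter.mpr ⟨h1.1, ?_⟩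
      rcases hcv u with ⟨h,hp⟩|⟨h,hp,hS⟩|⟨h,hp,hS⟩|⟨h,hp⟩|⟨h,hp⟩|⟨h,hp⟩ <;>
        first | exact hS | (exfalso; rw [h1.2] at h; omega)
    have hk5 : ((nH G S w).filter (fun u => cls u = 5)).card = 0 := by
      rw [Finset.card_eq_zero, Finset.filter_eq_empty_iff]
      intro u hu hc
      have h4 := htlb u hu
      rcases hcv u with ⟨h,hp⟩|⟨h,hp,_⟩|⟨h,hp,_⟩|⟨h,hp⟩|⟨h,hp⟩|⟨h,hp⟩ <;> rw [hc] at h <;> omega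
    -- income lower bound
    have hptI : ∀ u ∈ nH G S w, (fun i => if i = 0 then (30:ℤ) else if i = 1 then 36
        else if i = 2 then 30 else if i = 3 then 44 else if i = 4 then 50 else 0)
        (cls u) ≤ pay G S u w := by
      intro u hu
      have h2 := hall u hu
      have hiv : pay G S u w = payS2 G S u := pay_to_S2 hwS hD (by omega)
      rcases hcv u with ⟨h,hp⟩|⟨h,hp,hS⟩|⟨h,hp,hS⟩|⟨h,hp⟩|⟨h,hp⟩|⟨h,hp⟩ <;>
        rw [h] <;> norm_num <;> rw [hiv]
      · rw [payS2_t3 hp]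
      · rw [payS2_t4S hp hS]
      · rw [payS2_t4U hp hS]
      · rw [payS2_t5 hp]
      · rw [payS2_t6 hp]
      · exact le_trans (by norm_num) (payS2_nonneg (G := G) (S := S) u)
    have hIncB := sum_ge_cls (N := nH G S w) cls (fun u => pay G S u w)
      (fun i => if i = 0 then (30:ℤ) else if i = 1 then 36
        else if i = 2 then 30 else if i = 3 then 44 else if i = 4 then 50 else 0) 6 hclsm hptI
    simp only [Finset.sum_range_succ, Finset.sum_range_zero] at hStU hcards hIncB
    norm_num at hStU hIncB
    rw [hcard_eq] at hcards
    omega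
  · -- a rich neighbour together with the ≥ 30 from the other neighbour
    push_neg at hall
    obtain ⟨u0, hu0, h7⟩ := hall
    have hInc : (90:ℤ) ≤ ∑ u ∈ nH G S w, pay G S u w := by
      rw [← Finset.add_sum_erase _ _ hu0, pay_rich h7]
      have hb : (((nH G S w).erase u0).card : ℤ) * 30 ≤
          ∑ u ∈ (nH G S w).erase u0, pay G S u w := by
        have h9 := Finset.card_nsmul_le_sum ((nH G S w).erase u0) (fun u => pay G S u w) 30 ?_
        · rw [nsmul_eq_mul] at h9; exact h9
        · intro u hu
          have hu' := Finset.mem_of_mem_erase hu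
          show (30:ℤ) ≤ pay G S u w
          by_cases h7u : 7 ≤ dH G S u
          · rw [pay_rich h7u]; norm_num
          · rw [pay_to_S2 hwS hD h7u]
            have h4 := htlb u hu'
            exact payS2_ge30 (by omega)
      have hcc : (((nH G S w).erase u0).card : ℕ) = 1 := by
        rw [Finset.card_erase_of_mem hu0, hcard_eq, hD]
      rw [hcc] at hb
      norm_num at hb
      linarith
    norm_num
    linarith

/-- per-vertex inequality, `S`-vertices of degree 3. -/
lemma mainIneqS3 (hΔ : 6 ≤ G.maxDegree)
    (hbad : ∀ v ∈ S, G.maxDegree + 3 ≤ (S.filter (fun u => TwoDistAdj G u v)).card)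
    {w : V} (hw : w ∈ WS G S) (hwS : w ∈ S) (hrich : ¬ 7 ≤ dH G S w)
    (hD : dH G S w = 3) :
    (280 : ℤ) ≤ 100 * dH G S w + ∑ u ∈ nH G S w, (pay G S u w - pay G S w u) := by
  have ht_le : tS G S w ≤ dH G S w := tS_le_dH w
  have hcard_eq : (nH G S w).card = dH G S w := rfl
  have hps2 : payS2 G S w ≤ 30 := by
    rcases Nat.lt_or_ge (tS G S w) 3 with h | h
    · rw [payS2_low (by omega)]; norm_num
    · rw [payS2_t3 (by omega)]
  have hsplitsum : ∑ u ∈ nH G S w, (pay G S u w - pay G S w u)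
      = (∑ u ∈ nH G S w, pay G S u w) - (∑ u ∈ nH G S w, pay G S w u) :=
    Finset.sum_sub_distrib _ _
  by_cases hall : ∀ u ∈ nH G S w, dH G S u < 7
  · -- no rich neighbour: counting argument
    have hC1 := C1 hbad hwS
    set cls : V → ℕ := fun u => if 5 ≤ tS G S u then 1 else if tS G S u = 4 then 0
      else if dH G S u = 2 then (if u ∈ S then 2 else 3) else 4 with hcls
    have hcv : ∀ u, (cls u = 0 ∧ tS G S u = 4) ∨ (cls u = 1 ∧ 5 ≤ tS G S u)
        ∨ (cls u = 2 ∧ dH G S u = 2 ∧ u ∈ S ∧ tS G S u ≤ 3)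
        ∨ (cls u = 3 ∧ dH G S u = 2 ∧ u ∉ S ∧ tS G S u ≤ 3)
        ∨ (cls u = 4 ∧ dH G S u ≠ 2 ∧ tS G S u ≤ 3) := by
      intro u
      rw [hcls]; dsimp only
      by_cases h5 : 5 ≤ tS G S u
      · exact Or.inr (Or.inl ⟨by rw [if_pos h5], h5⟩)
      · by_cases h4 : tS G S u = 4
        · exact Or.inl ⟨by rw [if_neg h5, if_pos h4], h4⟩
        · by_cases h2 : dH G S u = 2
          · by_cases hS : u ∈ S
            · exact Or.inr (Or.inr (Or.inl ⟨by rw [if_neg h5, if_neg h4, if_pos h2, if_pos hS],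
                h2, hS, by omega⟩))
            · exact Or.inr (Or.inr (Or.inr (Or.inl
                ⟨by rw [if_neg h5, if_neg h4, if_pos h2, if_neg hS], h2, hS, by omega⟩)))
          · exact Or.inr (Or.inr (Or.inr (Or.inr
              ⟨by rw [if_neg h5, if_neg h4, if_neg h2], h2, by omega⟩)))
    have hclsm : ∀ u ∈ nH G S w, cls u < 5 := by
      intro u _
      rcases hcv u with ⟨h,_⟩|⟨h,_⟩|⟨h,_⟩|⟨h,_⟩|⟨h,_⟩ <;> omega
    have hptT : ∀ u ∈ nH G S w, tS G S u ≤
        (fun i => if i = 0 then 4 else if i = 1 then 6 else if i = 2 then 2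
          else if i = 3 then 2 else 3) (cls u) := by
      intro u hu
      have h1 : tS G S u ≤ dH G S u := tS_le_dH u
      have h2 := hall u hu
      rcases hcv u with ⟨h,hp⟩|⟨h,hp⟩|⟨h,h2',hS,hp⟩|⟨h,h2',hS,hp⟩|⟨h,h2',hp⟩ <;>
        rw [h] <;> norm_num <;> omega
    have hStU := sum_nat_le_cls (N := nH G S w) cls (tS G S)
      (fun i => if i = 0 then 4 else if i = 1 then 6 else if i = 2 then 2
        else if i = 3 then 2 else 3) 5 hclsm hptT
    have hcards := card_cls (N := nH G S w) cls 5 hclsm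
    -- class-3 vertices are outside S
    have hk3 : ((nH G S w).filter (fun u => cls u = 3)).card ≤ dH G S w - tS G S w := by
      rw [← card_nonS_nbrs hwS]
      apply Finset.card_le_card
      intro u hu
      have h1 := Finset.mem_filter.mp hu
      refine Finset.mem_filter.mpr ⟨h1.1, ?_⟩
      rcases hcv u with ⟨h,hp⟩|⟨h,hp⟩|⟨h,h2',hS,hp⟩|⟨h,h2',hS,hp⟩|⟨h,h2',hp⟩ <;>
        first | exact hS | (exfalso; rw [h1.2] at h; omega)
    -- income lower bound
    have hptI : ∀ u ∈ nH G S w, (fun i => if i = 0 then (12:ℤ) else if i = 1 then 40 else 0)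
        (cls u) ≤ pay G S u w := by
      intro u hu
      have h2 := hall u hu
      have hiv : pay G S u w
          = (if tS G S u = 4 then 12 else if 5 ≤ tS G S u then 40 else 0) :=
        pay_to_S3 hwS hD (by omega)
      rcases hcv u with ⟨h,hp⟩|⟨h,hp⟩|⟨h,h2',hS,hp⟩|⟨h,h2',hS,hp⟩|⟨h,h2',hp⟩ <;>
        rw [h] <;> norm_num <;> rw [hiv]
      · rw [if_pos hp]
      · rw [if_neg (by omega), if_pos hp]
      all_goals rw [if_neg (by omega), if_neg (by omega)]
    have hIncB := sum_ge_cls (N := nH G S w) cls (fun u => pay G S u w)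
      (fun i => if i = 0 then (12:ℤ) else if i = 1 then 40 else 0) 5 hclsm hptI
    -- out-sum upper bound
    have hptO : ∀ u ∈ nH G S w, pay G S w u ≤
        (fun i => if i = 2 then payS2 G S w else if i = 3 then (40:ℤ) else 0) (cls u) := by
      intro u hu
      have h1 : tS G S u ≤ dH G S u := tS_le_dH u
      rcases hcv u with ⟨h,hp⟩|⟨h,hp⟩|⟨h,h2',hS,hp⟩|⟨h,h2',hS,hp⟩|⟨h,h2',hp⟩ <;>
        rw [h] <;> norm_num
      · rw [pay_from_zero hrich (by omega) (fun h' => by omega)]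
      · rw [pay_from_zero hrich (by omega) (fun h' => by omega)]
      · rw [pay_from_to_S2 hrich hS h2']
      · rw [pay_from_to_U2 hrich hS h2']
      · by_cases h3 : u ∈ S ∧ dH G S u = 3
        · rw [pay_from_to_S3 hrich h3.1 h3.2, if_neg (by omega), if_neg (by omega)]
        · rw [pay_from_zero hrich h2' h3]
    have hOutB := sum_le_cls (N := nH G S w) cls (fun u => pay G S w u)
      (fun i => if i = 2 then payS2 G S w else if i = 3 then (40:ℤ) else 0) 5 hclsm hptO
    rw [hsplitsum]
    simp only [Finset.sum_range_succ, Finset.sum_range_zero] at hStU hcards hIncB hOutB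
    norm_num at hStU hIncB hOutB
    rw [hcard_eq] at hcards
    rcases Nat.lt_or_ge (tS G S w) 3 with ht | ht
    · rw [payS2_low (by omega)] at hOutB
      omega
    · have ht3 : tS G S w = 3 := by omega
      rw [payS2_t3 ht3] at hOutB
      omega
  · -- w has a rich neighbour
    push_neg at hall
    obtain ⟨u0, hu0, h7⟩ := hall
    have hInc : (60:ℤ) ≤ ∑ u ∈ nH G S w, pay G S u w := by
      rw [← Finset.add_sum_erase _ _ hu0, pay_rich h7]
      have : (0:ℤ) ≤ ∑ u ∈ (nH G S w).erase u0, pay G S u w :=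
        Finset.sum_nonneg fun u _ => pay_nonneg u w
      linarith
    have hOut : ∑ u ∈ nH G S w, pay G S w u ≤ 80 := by
      rw [← Finset.add_sum_erase _ _ hu0]
      have hz : pay G S w u0 = 0 := pay_from_zero hrich (by omega) (fun h => by omega)
      have hb : ∑ u ∈ (nH G S w).erase u0, pay G S w u ≤
          (((nH G S w).erase u0).card : ℤ) * 40 := by
        have h9 := Finset.sum_le_card_nsmul ((nH G S w).erase u0) (fun u => pay G S w u) 40 ?_
        · rw [nsmul_eq_mul] at h9; exact h9
        · intro u _
          unfold pay
          rw [if_neg hrich]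
          split_ifs <;> first | omega | norm_num
      have hcc : (((nH G S w).erase u0).card : ℕ) = 2 := by
        rw [Finset.card_erase_of_mem hu0, hcard_eq, hD]
      rw [hcc] at hb
      norm_num at hb
      rw [hz]
      linarith
    rw [hsplitsum, hD]
    norm_num
    linarith

/-- per-vertex inequality, `S`-vertices of degree 4 to 6. -/
lemma mainIneqS456 (hΔ : 6 ≤ G.maxDegree)
    (hbad : ∀ v ∈ S, G.maxDegree + 3 ≤ (S.filter (fun u => TwoDistAdj G u v)).card)
    {w : V} (hw : w ∈ WS G S) (hwS : w ∈ S) (hrich : ¬ 7 ≤ dH G S w)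
    (hD : 4 ≤ dH G S w) :
    (280 : ℤ) ≤ 100 * dH G S w + ∑ u ∈ nH G S w, (pay G S u w - pay G S w u) := by
  have hd6 : dH G S w ≤ 6 := by omega
  have ht_le : tS G S w ≤ dH G S w := tS_le_dH w
  have hcard_eq : (nH G S w).card = dH G S w := rfl
  have hsplitsum : ∑ u ∈ nH G S w, (pay G S u w - pay G S w u)
      = (∑ u ∈ nH G S w, pay G S u w) - (∑ u ∈ nH G S w, pay G S w u) :=
    Finset.sum_sub_distrib _ _
  by_cases hall : ∀ u ∈ nH G S w, dH G S u < 7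
  · -- no rich neighbour: counting argument
    have hC1 := C1 hbad hwS
    set cls : V → ℕ := fun u => if dH G S u = 2 then (if u ∈ S then 0 else 1)
      else if dH G S u = 3 then (if u ∈ S then 2 else 3) else 3 with hcls
    have hcv : ∀ u, (cls u = 0 ∧ dH G S u = 2 ∧ u ∈ S) ∨ (cls u = 1 ∧ dH G S u = 2 ∧ u ∉ S)
        ∨ (cls u = 2 ∧ dH G S u = 3 ∧ u ∈ S)
        ∨ (cls u = 3 ∧ dH G S u ≠ 2 ∧ ¬ (dH G S u = 3 ∧ u ∈ S)) := by
      intro u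
      rw [hcls]; dsimp only
      by_cases h2 : dH G S u = 2
      · by_cases hS : u ∈ S
        · exact Or.inl ⟨by rw [if_pos h2, if_pos hS], h2, hS⟩
        · exact Or.inr (Or.inl ⟨by rw [if_pos h2, if_neg hS], h2, hS⟩)
      · by_cases h3 : dH G S u = 3
        · by_cases hS : u ∈ S
          · exact Or.inr (Or.inr (Or.inl ⟨by rw [if_neg h2, if_pos h3, if_pos hS], h3, hS⟩))
          · exact Or.inr (Or.inr (Or.inr ⟨by rw [if_neg h2, if_pos h3, if_neg hS], h2,
              fun h => hS h.2⟩))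
        · exact Or.inr (Or.inr (Or.inr ⟨by rw [if_neg h2, if_neg h3], h2, fun h => h3 h.1⟩))
    have hclsm : ∀ u ∈ nH G S w, cls u < 4 := by
      intro u _
      rcases hcv u with ⟨h,_⟩|⟨h,_⟩|⟨h,_⟩|⟨h,_⟩ <;> omega
    -- t-sum upper bound by class
    have hptT : ∀ u ∈ nH G S w, tS G S u ≤
        (fun i => if i = 0 then 2 else if i = 1 then 2 else if i = 2 then 3 else 6) (cls u) := by
      intro u hu
      have h1 : tS G S u ≤ dH G S u := tS_le_dH u
      have h2 := hall u hu
      rcases hcv u with ⟨h,hd,_⟩|⟨h,hd,_⟩|⟨h,hd,_⟩|⟨h,hd,_⟩ <;> rw [h] <;> norm_num <;> omega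
    have hStU := sum_nat_le_cls (N := nH G S w) cls (tS G S)
      (fun i => if i = 0 then 2 else if i = 1 then 2 else if i = 2 then 3 else 6) 4 hclsm hptT
    have hcards := card_cls (N := nH G S w) cls 4 hclsm
    -- k1 consists of non-S vertices
    have hk1 : ((nH G S w).filter (fun u => cls u = 1)).card ≤ dH G S w - tS G S w := by
      rw [← card_nonS_nbrs hwS]
      apply Finset.card_le_card
      intro u hu
      have h1 := Finset.mem_filter.mp hu
      refine Finset.mem_filter.mpr ⟨h1.1, ?_⟩
      rcases hcv u with ⟨h,hd,hS⟩|⟨h,hd,hS⟩|⟨h,hd,hS⟩|⟨h,hd,hS⟩ <;>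
        first | exact hS | (exfalso; omega) | (exfalso; rw [h1.2] at h; omega)
    -- income is nonnegative
    have hInc : (0:ℤ) ≤ ∑ u ∈ nH G S w, pay G S u w :=
      Finset.sum_nonneg fun u _ => pay_nonneg u w
    -- the class-0 fiber is empty when t ≤ 2
    have hk0t : tS G S w ≤ 2 → ((nH G S w).filter (fun u => cls u = 0)).card = 0 := by
      intro ht
      rw [Finset.card_eq_zero, Finset.filter_eq_empty_iff]
      intro u hu hc
      rcases hcv u with ⟨h,hd,hS⟩|⟨h,hd,hS⟩|⟨h,hd,hS⟩|⟨h,hd,hS⟩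
      · have h5 := (S2_nbr_t hΔ hbad hS hd (nH_symm hw hu)).1
        have h6 : tS G S u ≤ dH G S u := tS_le_dH u
        omega
      all_goals rw [hc] at h; omega
    -- out-sum bound, for given bounds on the unit payments
    have houtbound : ∀ (C0 C2 : ℤ), payS2 G S w ≤ C0 →
        ((if tS G S w = 4 then 12 else if 5 ≤ tS G S w then 40 else 0) : ℤ) ≤ C2 →
        ∑ u ∈ nH G S w, pay G S w u ≤
          C0 * (((nH G S w).filter (fun u => cls u = 0)).card : ℤ)
          + 40 * (((nH G S w).filter (fun u => cls u = 1)).card : ℤ)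
          + C2 * (((nH G S w).filter (fun u => cls u = 2)).card : ℤ)
          + 0 * (((nH G S w).filter (fun u => cls u = 3)).card : ℤ) := by
      intro C0 C2 hC0 hC2
      have hpt : ∀ u ∈ nH G S w, pay G S w u ≤
          (fun i => if i = 0 then C0 else if i = 1 then 40 else if i = 2 then C2 else 0)
            (cls u) := by
        intro u hu
        rcases hcv u with ⟨h,hd,hS⟩|⟨h,hd,hS⟩|⟨h,hd,hS⟩|⟨h,hd,hS⟩ <;> rw [h] <;> norm_num
        · rw [pay_from_to_S2 hrich hS hd]; exact hC0
        · rw [pay_from_to_U2 hrich hS hd]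
        · rw [pay_from_to_S3 hrich hS hd]; exact hC2
        · rw [pay_from_zero hrich hd (fun h' => hS ⟨h'.2, h'.1⟩)]
      have h := sum_le_cls (N := nH G S w) cls (fun u => pay G S w u)
        (fun i => if i = 0 then C0 else if i = 1 then 40 else if i = 2 then C2 else 0)
        4 hclsm hpt
      calc ∑ u ∈ nH G S w, pay G S w u ≤ _ := h
        _ = _ := by
          simp only [Finset.sum_range_succ, Finset.sum_range_zero]
          norm_num
    -- expand the fiberwise sums
    rw [hsplitsum]
    simp only [Finset.sum_range_succ, Finset.sum_range_zero] at hStU hcards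
    norm_num at hStU
    rw [hcard_eq] at hcards
    -- case on the value of t
    have htcase : tS G S w ≤ 2 ∨ tS G S w = 3 ∨ tS G S w = 4 ∨ tS G S w = 5 ∨ tS G S w = 6 := by
      omega
    rcases htcase with ht | ht | ht | ht | ht
    · have hout := houtbound 0 0 (le_of_eq (payS2_low ht)) (by split_ifs <;> omega)
      have hk0z := hk0t ht
      omega
    · have hout := houtbound 30 0 (le_of_eq (payS2_t3 ht)) (by split_ifs <;> omega)
      omega
    · have hout := houtbound 36 12 (le_of_eq (payS2_t4S ht hwS)) (by split_ifs <;> omega)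
      omega
    · have hout := houtbound 44 40 (le_of_eq (payS2_t5 ht)) (by split_ifs <;> omega)
      omega
    · have hout := houtbound 50 40 (le_of_eq (payS2_t6 (by omega))) (by split_ifs <;> omega)
      omega
  · -- w has a rich neighbour: it receives 60 and pays at most 50 on the other edges
    push_neg at hall
    obtain ⟨u0, hu0, h7⟩ := hall
    have h7' : 7 ≤ dH G S u0 := h7
    have hInc : (60:ℤ) ≤ ∑ u ∈ nH G S w, pay G S u w := by
      rw [← Finset.add_sum_erase _ _ hu0, pay_rich h7']
      have : (0:ℤ) ≤ ∑ u ∈ (nH G S w).erase u0, pay G S u w :=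
        Finset.sum_nonneg fun u _ => pay_nonneg u w
      linarith
    have hOut : ∑ u ∈ nH G S w, pay G S w u ≤ 50 * ((dH G S w : ℤ) - 1) := by
      rw [← Finset.add_sum_erase _ _ hu0]
      have hz : pay G S w u0 = 0 := pay_from_zero hrich (by omega) (fun h => by omega)
      have hb : ∑ u ∈ (nH G S w).erase u0, pay G S w u ≤
          (((nH G S w).erase u0).card : ℤ) * 50 := by
        have h9 := Finset.sum_le_card_nsmul ((nH G S w).erase u0) (fun u => pay G S w u) 50 ?_
        · rw [nsmul_eq_mul] at h9; exact h9
        · intro u _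
          have h1 := payS2_le (G := G) (S := S) w
          unfold pay
          rw [if_neg hrich]
          split_ifs <;> omega
      have hc : ((((nH G S w).erase u0).card : ℕ) : ℤ) = (dH G S w : ℤ) - 1 := by
        rw [Finset.card_erase_of_mem hu0, hcard_eq]
        have h1 : 1 ≤ dH G S w := by omega
        push_cast [Nat.cast_sub h1]
        ring
      rw [hc] at hb
      rw [hz]
      linarith
    rw [hsplitsum]
    have hD' : (4:ℤ) ≤ (dH G S w:ℤ) := by exact_mod_cast hD
    linarith

/-- per-vertex inequality for `S`-vertices. -/
lemma mainIneqS (hΔ : 6 ≤ G.maxDegree)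
    (hbad : ∀ v ∈ S, G.maxDegree + 3 ≤ (S.filter (fun u => TwoDistAdj G u v)).card)
    {w : V} (hw : w ∈ WS G S) (hwS : w ∈ S) (hrich : ¬ 7 ≤ dH G S w) :
    (280 : ℤ) ≤ 100 * dH G S w + ∑ u ∈ nH G S w, (pay G S u w - pay G S w u) := by
  have hd2 := dH_ge_two_S hΔ hbad hwS
  by_cases hD2 : dH G S w = 2
  · exact mainIneqS2 hΔ hbad hw hwS hrich hD2
  · by_cases hD3 : dH G S w = 3
    · exact mainIneqS3 hΔ hbad hw hwS hrich hD3
    · exact mainIneqS456 hΔ hbad hw hwS hrich (by omega)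

/-- the per-vertex discharging inequality. -/
lemma mainIneq (hΔ : 6 ≤ G.maxDegree)
    (hbad : ∀ v ∈ S, G.maxDegree + 3 ≤ (S.filter (fun u => TwoDistAdj G u v)).card)
    {w : V} (hw : w ∈ WS G S) :
    (280 : ℤ) ≤ 100 * dH G S w + ∑ u ∈ nH G S w, (pay G S u w - pay G S w u) := by
  have hcard_eq : (nH G S w).card = dH G S w := rfl
  by_cases hrich : 7 ≤ dH G S w
  · -- rich vertices pay at most 60 per edge
    have h1 : ∀ u ∈ nH G S w, (-60 : ℤ) ≤ pay G S u w - pay G S w u := by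
      intro u hu
      have h2 := pay_nonneg (G := G) (S := S) u w
      have h3 := pay_le_60 (G := G) (S := S) w u
      linarith
    have h4 := Finset.card_nsmul_le_sum (nH G S w) _ _ h1
    rw [nsmul_eq_mul, hcard_eq] at h4
    have h5 : (7 : ℤ) ≤ (dH G S w : ℤ) := by exact_mod_cast hrich
    linarith
  -- small vertices
  by_cases hwS : w ∈ S
  · exact mainIneqS hΔ hbad hw hwS hrich
  · -- U-vertices
    have hwU : w ∈ US G S := by
      rcases Finset.mem_union.mp hw with h | h
      · exact absurd h hwS
      · exact h
    have ht2 : 2 ≤ tS G S w := (Finset.mem_filter.mp hwU).2.2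
    have hdt : dH G S w = tS G S w := dH_eq_tS_of_US hwU
    have hallS : ∀ u ∈ nH G S w, u ∈ S := by
      intro u hu
      rw [nH_of_not_mem_S hwS] at hu
      exact (Finset.mem_inter.mp hu).2
    by_cases hD2 : dH G S w = 2
    · -- degree-2 hub: receives 40 per edge, pays nothing
      have h1 : ∀ u ∈ nH G S w, (40 : ℤ) ≤ pay G S u w - pay G S w u := by
        intro u hu
        have hinc : (40 : ℤ) ≤ pay G S u w := by
          rw [pay_to_U2 hwS hD2]
          split_ifs <;> norm_num
        have hout : pay G S w u = 0 := by
          have huS := hallS u hu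
          by_cases hdu2 : dH G S u = 2
          · rw [pay_from_to_S2 hrich huS hdu2, payS2_low (by omega)]
          · by_cases hdu3 : dH G S u = 3
            · rw [pay_from_to_S3 hrich huS hdu3, if_neg (by omega), if_neg (by omega)]
            · exact pay_from_zero hrich hdu2 (fun h => hdu3 h.2)
        linarith
      have h4 := Finset.card_nsmul_le_sum (nH G S w) _ _ h1
      rw [nsmul_eq_mul, hcard_eq, hD2] at h4
      rw [hD2]
      norm_num at h4 ⊢
      linarith
    · -- hub of degree 3..6: pays at most (0, 30, 44, 50) per edge
      have hd3 : 3 ≤ dH G S w := by omega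
      have hd6 : dH G S w ≤ 6 := by omega
      -- per-edge payment bound
      have hout : ∀ u ∈ nH G S w, pay G S w u ≤
          (if dH G S w = 3 then 0 else if dH G S w = 4 then 30 else
            if dH G S w = 5 then 44 else 50) := by
        intro u hu
        have huS := hallS u hu
        by_cases hdu2 : dH G S u = 2
        · -- u is a degree-2 S-vertex; its neighbours outside S have t ≥ 4
          have hwnu : w ∈ nH G S u := nH_symm hw hu
          have h5 := (S2_nbr_t hΔ hbad huS hdu2 hwnu).2 hwS
          rw [pay_from_to_S2 hrich huS hdu2]
          rcases Nat.lt_or_ge (tS G S w) 5 with h | h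
          · have ht4 : tS G S w = 4 := by omega
            rw [payS2_t4U ht4 hwS]
            split_ifs <;> omega
          · rcases Nat.lt_or_ge (tS G S w) 6 with h6 | h6
            · rw [payS2_t5 (by omega)]
              split_ifs <;> omega
            · rw [payS2_t6 h6]
              split_ifs <;> omega
        · by_cases hdu3 : dH G S u = 3
          · rw [pay_from_to_S3 hrich huS hdu3]
            split_ifs <;> omega
          · rw [pay_from_zero hrich hdu2 (fun h => hdu3 h.2)]
            split_ifs <;> omega
      have h1 : ∀ u ∈ nH G S w, (-(if dH G S w = 3 then 0 else if dH G S w = 4 then 30 else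
          if dH G S w = 5 then 44 else 50) : ℤ) ≤ pay G S u w - pay G S w u := by
        intro u hu
        have h2 := pay_nonneg (G := G) (S := S) u w
        have h3 := hout u hu
        linarith
      have h4 := Finset.card_nsmul_le_sum (nH G S w) _ _ h1
      rw [nsmul_eq_mul, hcard_eq] at h4
      have hDcases : dH G S w = 3 ∨ dH G S w = 4 ∨ dH G S w = 5 ∨ dH G S w = 6 := by omega
      rcases hDcases with hD | hD | hD | hD <;>
        · rw [hD] at h4 ⊢
          norm_num at h4 ⊢
          linarith

lemma total (hΔ : 6 ≤ G.maxDegree)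
    (hbad : ∀ v ∈ S, G.maxDegree + 3 ≤ (S.filter (fun u => TwoDistAdj G u v)).card) :
    14 * (WS G S).card ≤ 5 * ∑ w ∈ WS G S, dH G S w := by
  have h1 : (WS G S).card • (280 : ℤ) ≤
      ∑ w ∈ WS G S, (100 * dH G S w + ∑ u ∈ nH G S w, (pay G S u w - pay G S w u)) :=
    Finset.card_nsmul_le_sum _ _ _ (fun w hw => mainIneq hΔ hbad hw)
  rw [Finset.sum_add_distrib, conserv, add_zero, ← Finset.mul_sum] at h1
  rw [nsmul_eq_mul] at h1
  have h4 : (∑ w ∈ WS G S, (dH G S w : ℤ)) = ((∑ w ∈ WS G S, dH G S w : ℕ) : ℤ) := by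
    push_cast; rfl
  rw [h4] at h1
  have h3 : (14 * (WS G S).card : ℤ) ≤ 5 * ((∑ w ∈ WS G S, dH G S w : ℕ) : ℤ) := by linarith
  exact_mod_cast h3

end Discharge

/-- The key combinatorial lemma: if `mad G < 14/5` and `Δ ≥ 6` then any nonempty set `S`
contains a vertex with at most `Δ+2` vertices of `S` at distance at most 2. -/
lemma exists_low_back_degree (G : SimpleGraph V) [DecidableRel G.Adj]
    (hmad : mad G < 14 / 5) (hΔ : 6 ≤ G.maxDegree) (S : Finset V) (hS : S.Nonempty) :
    ∃ v ∈ S, (S.filter (fun u => TwoDistAdj G u v)).card ≤ G.maxDegree + 2 := by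
  by_contra hcon
  push_neg at hcon
  have hbad : ∀ v ∈ S, G.maxDegree + 3 ≤ (S.filter (fun u => TwoDistAdj G u v)).card := by
    intro v hv
    have := hcon v hv
    omega
  have htot := total hΔ hbad
  -- the auxiliary graph
  let G' : SimpleGraph V :=
    { Adj := fun x y => x ∈ WS G S ∧ y ∈ WS G S ∧ (x ∈ S ∨ y ∈ S) ∧ G.Adj x y,
      symm := by
        constructor
        intro x y ⟨h1, h2, h3, h4⟩
        exact ⟨h2, h1, h3.symm, h4.symm⟩,
      loopless := ⟨fun x h => G.irrefl h.2.2.2⟩ }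
  haveI : DecidableRel G'.Adj := fun x y =>
    inferInstanceAs (Decidable (x ∈ WS G S ∧ y ∈ WS G S ∧ (x ∈ S ∨ y ∈ S) ∧ G.Adj x y))
  have hnbr : ∀ w ∈ WS G S, G'.neighborFinset w = nH G S w := by
    intro w hw
    ext u
    rw [mem_nbr (G := G'), mem_nH]
    constructor
    · rintro ⟨_, h2, h3, h4⟩
      exact ⟨h4, h2, h3⟩
    · rintro ⟨h1, h2, h3⟩
      exact ⟨hw, h2, h3, h1⟩
  have hdeg : ∀ w ∈ WS G S, G'.degree w = dH G S w := by
    intro w hw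
    rw [← SimpleGraph.card_neighborFinset_eq_degree, hnbr w hw]
    rfl
  have hdeg0 : ∀ w, w ∉ WS G S → G'.degree w = 0 := by
    intro w hw
    have hemp : G'.neighborFinset w = ∅ :=
      Finset.eq_empty_iff_forall_notMem.mpr fun u hu => hw ((mem_nbr (G := G')).mp hu).1
    rw [← SimpleGraph.card_neighborFinset_eq_degree, hemp, Finset.card_empty]
  have hhs : ∑ w ∈ WS G S, dH G S w = 2 * G'.edgeFinset.card := by
    rw [← SimpleGraph.sum_degrees_eq_twice_card_edges]
    rw [← Finset.sum_subset (Finset.subset_univ (WS G S)) (fun x _ hx => hdeg0 x hx)]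
    exact Finset.sum_congr rfl fun w hw => (hdeg w hw).symm
  -- the subgraph
  let HH : G.Subgraph :=
    { verts := ↑(WS G S),
      Adj := G'.Adj,
      adj_sub := fun h => h.2.2.2,
      edge_vert := fun h => Finset.mem_coe.mpr h.1,
      symm := G'.symm }
  have hE : HH.edgeSet = G'.edgeSet := by
    ext e
    induction e using Sym2.ind with
    | _ x y =>
      rw [SimpleGraph.Subgraph.mem_edgeSet, SimpleGraph.mem_edgeSet]
  have hen : HH.edgeSet.ncard = G'.edgeFinset.card := by
    rw [hE, ← SimpleGraph.coe_edgeFinset, Set.ncard_coe_finset]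
  have hvn : HH.verts.ncard = (WS G S).card := Set.ncard_coe_finset _
  obtain ⟨v0, hv0⟩ := hS
  have hnonempty : HH.verts.Nonempty := ⟨v0, Finset.mem_coe.mpr (S_subset_WS hv0)⟩
  have hnpos : 0 < (WS G S).card := Finset.card_pos.mpr ⟨v0, S_subset_WS hv0⟩
  set madSet : Set ℝ := {x : ℝ | ∃ H : G.Subgraph, H.verts.Nonempty ∧
    x = 2 * H.edgeSet.ncard / H.verts.ncard} with hmadSet
  have hx : (2 * (G'.edgeFinset.card : ℝ) / ((WS G S).card : ℝ)) ∈ madSet := by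
    refine ⟨HH, hnonempty, ?_⟩
    rw [hen, hvn]
  have hbdd : BddAbove madSet := by
    refine ⟨2 * (Nat.card (Sym2 V) : ℝ), fun x hx => ?_⟩
    obtain ⟨H, hne, rfl⟩ := hx
    have he : (H.edgeSet.ncard : ℝ) ≤ (Nat.card (Sym2 V) : ℝ) := by
      have := Set.ncard_le_ncard (Set.subset_univ H.edgeSet) Set.finite_univ
      rw [Set.ncard_univ] at this
      exact_mod_cast this
    have hn1 : (1 : ℝ) ≤ (H.verts.ncard : ℝ) := by
      have : 0 < H.verts.ncard := (Set.ncard_pos H.verts.toFinite).mpr hne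
      exact_mod_cast this
    calc 2 * (H.edgeSet.ncard : ℝ) / (H.verts.ncard : ℝ)
        ≤ 2 * (H.edgeSet.ncard : ℝ) / 1 := by
          apply div_le_div_of_nonneg_left _ (by norm_num) hn1
          positivity
      _ = 2 * (H.edgeSet.ncard : ℝ) := by ring
      _ ≤ 2 * (Nat.card (Sym2 V) : ℝ) := by linarith
  have hle : (2 * (G'.edgeFinset.card : ℝ) / ((WS G S).card : ℝ)) ≤ mad G := le_csSup hbdd hx
  have h145 : (14 / 5 : ℝ) ≤ 2 * (G'.edgeFinset.card : ℝ) / ((WS G S).card : ℝ) := by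
    rw [div_le_div_iff₀ (by norm_num) (by exact_mod_cast hnpos)]
    have : (14 * (WS G S).card : ℝ) ≤ 5 * (2 * (G'.edgeFinset.card : ℝ)) := by
      have h10 : 14 * (WS G S).card ≤ 5 * (2 * G'.edgeFinset.card) := by
        rw [← hhs]; exact htot
      exact_mod_cast h10
    linarith
  linarith

/-- Greedy list coloring along a degenerate order. -/
lemma greedy (G : SimpleGraph V) [DecidableRel G.Adj]
    (hmad : mad G < 14 / 5) (hΔ : 6 ≤ G.maxDegree)
    (L : V → Finset ℕ) (hL : ∀ v, G.maxDegree + 3 ≤ (L v).card) :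
    ∀ S : Finset V, ∃ φ : V → ℕ, (∀ v ∈ S, φ v ∈ L v) ∧
      ∀ u ∈ S, ∀ v ∈ S, TwoDistAdj G u v → φ u ≠ φ v := by
  intro S
  induction S using Finset.strongInduction with
  | _ S ih =>
    rcases S.eq_empty_or_nonempty with rfl | hne
    · exact ⟨fun v => 0, by simp, by simp⟩
    · obtain ⟨v₀, hv₀S, hv₀⟩ := exists_low_back_degree G hmad hΔ S hne
      obtain ⟨φ₀, hφ₀L, hφ₀⟩ := ih (S.erase v₀) (Finset.erase_ssubset hv₀S)
      set forb : Finset ℕ :=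
        ((S.erase v₀).filter (fun u => TwoDistAdj G u v₀)).image φ₀ with hforb
      have hcard : forb.card < (L v₀).card := by
        calc forb.card ≤ ((S.erase v₀).filter (fun u => TwoDistAdj G u v₀)).card :=
              Finset.card_image_le
          _ ≤ (S.filter (fun u => TwoDistAdj G u v₀)).card :=
              Finset.card_le_card (Finset.filter_subset_filter _ (S.erase_subset v₀))
          _ ≤ G.maxDegree + 2 := hv₀
          _ < G.maxDegree + 3 := by omega
          _ ≤ (L v₀).card := hL v₀
      have hex : ∃ c ∈ L v₀, c ∉ forb := by
        by_contra h
        push_neg at h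
        exact absurd (Finset.card_le_card fun c hc => h c hc) (not_le.mpr hcard)
      obtain ⟨c, hcL, hcforb⟩ := hex
      refine ⟨Function.update φ₀ v₀ c, ?_, ?_⟩
      · intro v hv
        rcases eq_or_ne v v₀ with rfl | hvne
        · simpa using hcL
        · rw [Function.update_of_ne hvne]
          exact hφ₀L v (Finset.mem_erase.mpr ⟨hvne, hv⟩)
      · intro u hu v hv hadj
        have hne := hadj.1
        have key : ∀ x ∈ S.erase v₀, TwoDistAdj G x v₀ →
            Function.update φ₀ v₀ c x ≠ Function.update φ₀ v₀ c v₀ := by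
          intro x hx hxadj
          rw [Function.update_of_ne (Finset.mem_erase.mp hx).1, Function.update_self]
          intro hcontra
          exact hcforb (hforb ▸ Finset.mem_image.mpr
            ⟨x, Finset.mem_filter.mpr ⟨hx, hxadj⟩, hcontra⟩)
        by_cases hu0 : u = v₀
        · have hvne : v ≠ v₀ := by rw [← hu0]; exact fun h => hne h.symm
          have hv' : v ∈ S.erase v₀ := Finset.mem_erase.mpr ⟨hvne, hv⟩
          rw [hu0]
          exact fun h => key v hv' (twoDistAdj_symm (hu0 ▸ hadj)) h.symm
        · by_cases hv0 : v = v₀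
          · rw [hv0]
            exact key u (Finset.mem_erase.mpr ⟨hu0, hu⟩) (hv0 ▸ hadj)
          · rw [Function.update_of_ne hu0, Function.update_of_ne hv0]
            exact hφ₀ u (Finset.mem_erase.mpr ⟨hu0, hu⟩) v (Finset.mem_erase.mpr ⟨hv0, hv⟩) hadj

theorem main (G : SimpleGraph V) [DecidableRel G.Adj]
    (hmad : mad G < 14 / 5) (hΔ : 6 ≤ G.maxDegree) :
    ∀ L : V → Finset ℕ, (∀ v, G.maxDegree + 3 ≤ (L v).card) →
      ∃ φ : V → ℕ, IsTwoDistListColoring G L φ := by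
  intro L hL
  obtain ⟨φ, h1, h2⟩ := greedy G hmad hΔ L hL Finset.univ
  exact ⟨φ, fun v => h1 v (Finset.mem_univ v),
    fun u v h => h2 u (Finset.mem_univ u) v (Finset.mem_univ v) h⟩

end MadAux

/-- Main Theorem 2: every graph with `mad < 14/5` and `Δ ≥ 6` is 2-distance
`(Δ + 3)`-choosable. -/
theorem twoDist_choosable_of_mad_lt_fourteen_fifths
    {V : Type} [Fintype V] [DecidableEq V] (G : SimpleGraph V) [DecidableRel G.Adj]
    (hmad : mad G < 14 / 5) (hΔ : 6 ≤ G.maxDegree) :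
    ∀ L : V → Finset ℕ, (∀ v, G.maxDegree + 3 ≤ (L v).card) →
      ∃ φ : V → ℕ, IsTwoDistListColoring G L φ := by
  exact MadAux.main G hmad hΔ
end
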